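/- arXiv:1908.05246 — 7 statements merged into one kernel-verified Lean document; each statement's English description precedes it below -/
import Mathlib

section
/- Let q > 0 and let (p_n)_{n ≥ 1} be the q-Mallows process. Then for every n, the random permutation p_n is distributed according to the Mallows measure μ_{n, 1/q}. -/
open MeasureTheory Filter

/-- Number of inversions of a permutation of `Fin n`. -/
def inversions {n : ℕ} (π : Equiv.Perm (Fin n)) : ℕ :=
  (Finset.univ.filter (fun p : Fin n × Fin n => p.1 < p.2 ∧ π p.2 < π p.1)).card

/-- The probability assigned to `σ` by the Mallows measure `μ_{n,q}`. -/
noncomputable def mallowsProb (n : ℕ) (q : ℝ) (σ : Equiv.Perm (Fin n)) : ℝ :=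
  q ^ inversions σ / ∑ τ : Equiv.Perm (Fin n), q ^ inversions τ

/-- `X` is a random permutation distributed according to the Mallows measure `μ_{n,q}`. -/
def IsMallows {Ω : Type*} [MeasurableSpace Ω] (ℙ : Measure Ω) {n : ℕ} (q : ℝ)
    (X : Ω → Equiv.Perm (Fin n)) : Prop :=
  ∀ σ : Equiv.Perm (Fin n), (ℙ {ω | X ω = σ}).toReal = mallowsProb n q σ

/-- The `q`-Mallows process: a sequence of random permutations `p n ∈ S_n` (we index the
permutation of `{1, …, n}` by `Equiv.Perm (Fin n)`, with `0`-based values, so that the `1`-based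
quantity `p_n(i)` of the paper is `(p n ω ⟨i-1, _⟩ : ℕ) + 1`).
The last values `p_{n+1}(n+1)` are independent, with the truncated geometric distribution
`P(p_n(n) = j) = (1-q) q^{j-1} / (1-q^n)`, and the earlier values are updated by the
insertion rule. -/
structure QMallowsProcess (Ω : Type*) [MeasurableSpace Ω] (ℙ : Measure Ω) (q : ℝ) where
  /-- the permutation-valued process; `p n` is the permutation of `[n]`. -/
  p : (n : ℕ) → Ω → Equiv.Perm (Fin n)
  meas : ∀ n : ℕ, Measurable fun ω => ((p (n + 1) ω (Fin.last n) : ℕ))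
  /-- `P(p_n(n) = j) = (1-q)q^{j-1}/(1-q^n)` (here with `0`-based `j`). -/
  dist : ∀ (n : ℕ) (j : Fin (n + 1)),
    (ℙ {ω | p (n + 1) ω (Fin.last n) = j}).toReal = (1 - q) * q ^ (j : ℕ) / (1 - q ^ (n + 1))
  /-- the variables `p_n(n)`, `n ≥ 1`, are independent. -/
  indep : ProbabilityTheory.iIndepFun
    (fun (n : ℕ) (ω : Ω) => ((p (n + 1) ω (Fin.last n) : ℕ))) ℙ
  /-- the insertion rule: `p_n(i) = p_{n-1}(i)` if `p_{n-1}(i) < p_n(n)`, and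
  `p_n(i) = p_{n-1}(i) + 1` otherwise. -/
  step : ∀ (ω : Ω) (n : ℕ) (i : Fin n),
    ((p (n + 1) ω i.castSucc : ℕ)) =
      if ((p n ω i : ℕ)) < ((p (n + 1) ω (Fin.last n) : ℕ)) then ((p n ω i : ℕ))
      else ((p n ω i : ℕ)) + 1

section MallowsAux


lemma inversions_eq_sum {n : ℕ} (π : Equiv.Perm (Fin n)) :
    inversions π = ∑ a : Fin n, ∑ b : Fin n, if a < b ∧ π b < π a then 1 else 0 := by
  rw [inversions, Finset.card_filter]
  exact Fintype.sum_prod_type (f := fun p : Fin n × Fin n => if p.1 < p.2 ∧ π p.2 < π p.1 then (1:ℕ) else 0)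

lemma sum_ite_le {n j : ℕ} : (∑ k ∈ Finset.range n, if j ≤ k then 1 else 0) = n - j := by
  induction n with
  | zero => simp
  | succ n ih => rw [Finset.sum_range_succ, ih]; split_ifs with h <;> omega

lemma card_ge_perm {n : ℕ} (τ : Equiv.Perm (Fin n)) (j : ℕ) :
    (∑ a : Fin n, if j ≤ (τ a : ℕ) then 1 else 0) = n - j := by
  rw [Fintype.sum_bijective τ τ.bijective _ (fun v : Fin n => if j ≤ (v : ℕ) then 1 else 0)
    (fun a => rfl), Fin.sum_univ_eq_sum_range (fun k => if j ≤ k then 1 else 0), sum_ite_le]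

def insLast {n : ℕ} (τ : Equiv.Perm (Fin n)) (j : Fin (n+1)) : Equiv.Perm (Fin (n+1)) :=
  finSuccEquivLast.trans ((Equiv.optionCongr τ).trans (finSuccEquiv' j).symm)

@[simp] lemma insLast_castSucc {n : ℕ} (τ : Equiv.Perm (Fin n)) (j : Fin (n+1)) (i : Fin n) :
    insLast τ j i.castSucc = j.succAbove (τ i) := by
  simp [insLast]

@[simp] lemma insLast_last {n : ℕ} (τ : Equiv.Perm (Fin n)) (j : Fin (n+1)) :
    insLast τ j (Fin.last n) = j := by
  simp [insLast]

lemma lt_succAbove_iff' {n : ℕ} (j : Fin (n+1)) (k : Fin n) :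
    j < j.succAbove k ↔ (j : ℕ) ≤ (k : ℕ) := by
  rcases lt_or_ge k.castSucc j with h | h
  · rw [Fin.succAbove_of_castSucc_lt _ _ h]
    simp only [Fin.lt_def, Fin.coe_castSucc] at h ⊢
    omega
  · rw [Fin.succAbove_of_le_castSucc _ _ h]
    simp only [Fin.le_def, Fin.lt_def, Fin.coe_castSucc, Fin.val_succ] at h ⊢
    omega

lemma inversions_insLast {n : ℕ} (τ : Equiv.Perm (Fin n)) (j : Fin (n+1)) :
    inversions (insLast τ j) = inversions τ + (n - (j : ℕ)) := by
  rw [inversions_eq_sum, inversions_eq_sum]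
  rw [Fin.sum_univ_castSucc
    (f := fun a => ∑ b : Fin (n+1), if a < b ∧ insLast τ j b < insLast τ j a then 1 else 0)]
  have hlast : (∑ b : Fin (n+1),
      if Fin.last n < b ∧ insLast τ j b < insLast τ j (Fin.last n) then 1 else 0) = 0 := by
    apply Finset.sum_eq_zero
    intro b _
    simp [Fin.le_last b, not_lt.mpr (Fin.le_last b)]
  rw [hlast, add_zero]
  have hsplit : ∀ a : Fin n, (∑ b : Fin (n+1),
      if a.castSucc < b ∧ insLast τ j b < insLast τ j a.castSucc then 1 else 0) =
      (∑ b : Fin n, if a < b ∧ τ b < τ a then 1 else 0)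
        + (if (j : ℕ) ≤ (τ a : ℕ) then 1 else 0) := by
    intro a
    rw [Fin.sum_univ_castSucc (f := fun b =>
      if a.castSucc < b ∧ insLast τ j b < insLast τ j a.castSucc then 1 else 0)]
    congr 1
    · apply Finset.sum_congr rfl
      intro b _
      simp only [insLast_castSucc, Fin.castSucc_lt_castSucc_iff, Fin.succAbove_lt_succAbove_iff]
    · simp only [insLast_last, insLast_castSucc, Fin.castSucc_lt_last, true_and,
        lt_succAbove_iff']
  rw [Finset.sum_congr rfl (fun a _ => hsplit a), Finset.sum_add_distrib, card_ge_perm]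

lemma insLast_injective {n : ℕ} :
    Function.Injective (fun p : Equiv.Perm (Fin n) × Fin (n+1) => insLast p.1 p.2) := by
  rintro ⟨τ, j⟩ ⟨τ', j'⟩ h
  simp only at h
  have hj : j = j' := by
    have := congrArg (fun σ : Equiv.Perm (Fin (n+1)) => σ (Fin.last n)) h
    simpa using this
  subst hj
  have hτ : τ = τ' := by
    ext i
    have := congrArg (fun σ : Equiv.Perm (Fin (n+1)) => σ i.castSucc) h
    simp only [insLast_castSucc] at this
    have := Fin.succAbove_right_injective (p := j) this
    exact congrArg Fin.val this
  simp [hτ]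

noncomputable def insEquiv (n : ℕ) : Equiv.Perm (Fin n) × Fin (n+1) ≃ Equiv.Perm (Fin (n+1)) :=
  Equiv.ofBijective (fun p => insLast p.1 p.2)
    ((Fintype.bijective_iff_injective_and_card _).mpr ⟨insLast_injective, by
      simp [Fintype.card_perm, Nat.factorial_succ, mul_comm]⟩)

lemma Z_succ (n : ℕ) (r : ℝ) :
    (∑ σ : Equiv.Perm (Fin (n+1)), r ^ inversions σ) =
      (∑ τ : Equiv.Perm (Fin n), r ^ inversions τ) * (∑ j : Fin (n+1), r ^ (n - (j : ℕ))) := by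
  rw [← Equiv.sum_comp (insEquiv n) (fun σ => r ^ inversions σ), Fintype.sum_prod_type,
    Finset.sum_mul]
  apply Finset.sum_congr rfl
  intro τ _
  rw [Finset.mul_sum]
  apply Finset.sum_congr rfl
  intro j _
  show r ^ inversions (insLast τ j) = _
  rw [inversions_insLast, pow_add]

lemma pow_succ_ne_one {q : ℝ} (hq : 0 < q) (hq1 : q ≠ 1) (n : ℕ) : q ^ (n+1) ≠ 1 := by
  rcases lt_or_gt_of_ne hq1 with h | h
  · exact ne_of_lt (pow_lt_one₀ hq.le h (Nat.succ_ne_zero n))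
  · exact ne_of_gt (one_lt_pow₀ h (Nat.succ_ne_zero n))

lemma invpow_eq {q : ℝ} (hq : q ≠ 0) {n k : ℕ} (hk : k ≤ n) :
    (1/q) ^ (n - k) = q ^ k / q ^ n := by
  rw [div_pow, one_pow, div_eq_div_iff (pow_ne_zero _ hq) (pow_ne_zero _ hq), one_mul,
    ← pow_add]
  congr 1
  omega

lemma G_eq {q : ℝ} (hq : q ≠ 0) (n : ℕ) :
    (∑ j : Fin (n+1), (1/q) ^ (n - (j : ℕ))) = (∑ k ∈ Finset.range (n+1), q ^ k) / q ^ n := by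
  rw [Fin.sum_univ_eq_sum_range (fun k => (1/q) ^ (n - k)), Finset.sum_div]
  apply Finset.sum_congr rfl
  intro k hk
  rw [invpow_eq hq (by simp at hk; omega)]

lemma key_ratio {q : ℝ} (hq : 0 < q) (hq1 : q ≠ 1) (n : ℕ) (j : Fin (n+1)) :
    (1/q) ^ (n - (j : ℕ)) / (∑ j' : Fin (n+1), (1/q) ^ (n - (j' : ℕ))) =
      (1 - q) * q ^ (j : ℕ) / (1 - q ^ (n+1)) := by
  have hq0 : q ≠ 0 := ne_of_gt hq
  have h1 : (1 : ℝ) - q ^ (n+1) ≠ 0 := by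
    intro h
    exact pow_succ_ne_one hq hq1 n (by linarith)
  have hgeom : (∑ k ∈ Finset.range (n+1), q ^ k) = (1 - q ^ (n+1)) / (1 - q) := by
    rw [geom_sum_eq hq1]
    rw [div_eq_div_iff (by intro h; exact hq1 (by linarith)) (by intro h; exact hq1 (by linarith))]
    ring
  have h2 : (1 : ℝ) - q ≠ 0 := fun h => hq1 (by linarith)
  rw [G_eq hq0, invpow_eq hq0 (Nat.lt_succ_iff.mp j.isLt), hgeom]
  field_simp

lemma Z_pos {n : ℕ} {r : ℝ} (hr : 0 < r) :
    0 < ∑ τ : Equiv.Perm (Fin n), r ^ inversions τ :=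
  Finset.sum_pos (fun _ _ => pow_pos hr _) Finset.univ_nonempty


lemma mallows_rec {q : ℝ} (hq : 0 < q) (hq1 : q ≠ 1) (n : ℕ) (τ : Equiv.Perm (Fin n))
    (j : Fin (n+1)) :
    mallowsProb (n+1) (1/q) (insLast τ j) =
      mallowsProb n (1/q) τ * ((1 - q) * q ^ (j : ℕ) / (1 - q ^ (n+1))) := by
  rw [← key_ratio hq hq1 n j]
  rw [mallowsProb, mallowsProb, inversions_insLast, Z_succ, pow_add]
  have hZ := Z_pos (n := n) (r := 1/q) (by positivity)
  have hG : 0 < ∑ j' : Fin (n+1), (1/q) ^ (n - (j' : ℕ)) :=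
    Finset.sum_pos (fun _ _ => by positivity) Finset.univ_nonempty
  field_simp

lemma val_succAbove {n : ℕ} (j : Fin (n+1)) (k : Fin n) :
    ((j.succAbove k : Fin (n+1)) : ℕ) = if (k : ℕ) < (j : ℕ) then (k : ℕ) else (k : ℕ) + 1 := by
  rcases lt_or_ge k.castSucc j with h | h
  · rw [Fin.succAbove_of_castSucc_lt _ _ h]
    have : (k : ℕ) < (j : ℕ) := h
    simp [this]
  · rw [Fin.succAbove_of_le_castSucc _ _ h]
    have : ¬ ((k : ℕ) < (j : ℕ)) := by
      have : (j : ℕ) ≤ (k : ℕ) := h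
      omega
    simp [this]

def gPerm : (n : ℕ) → (Fin n → ℕ) → Equiv.Perm (Fin n)
  | 0, _ => 1
  | (n+1), v => insLast (gPerm n (fun i => v i.castSucc))
      (if h : v (Fin.last n) < n + 1 then ⟨v (Fin.last n), h⟩ else 0)

lemma meas_all {α : Type*} [Finite α] (s : Set (α → ℕ)) : MeasurableSet s := by
  have hsing : ∀ v : α → ℕ, MeasurableSet {v} := by
    intro v
    have : {v} = ⋂ i, (fun w : α → ℕ => w i) ⁻¹' {v i} := by
      ext w
      simp [funext_iff]
    rw [this]
    have : Countable α := Finite.to_countable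
    exact MeasurableSet.iInter (fun i => measurable_pi_apply i (measurableSet_singleton _))
  have hcount : s.Countable := by
    have : Countable (α → ℕ) := by
      have : Countable α := Finite.to_countable
      infer_instance
    exact s.to_countable
  rw [← Set.biUnion_of_singleton s]
  exact MeasurableSet.biUnion hcount (fun v _ => hsing v)


variable {Ω : Type*} [MeasurableSpace Ω] {ℙ : Measure Ω} {q : ℝ}

lemma p_succ_eq (P : QMallowsProcess Ω ℙ q) (ω : Ω) (n : ℕ) :
    P.p (n+1) ω = insLast (P.p n ω) (P.p (n+1) ω (Fin.last n)) := by
  apply Equiv.ext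
  intro i
  induction i using Fin.lastCases with
  | last => rw [insLast_last]
  | cast i =>
    apply Fin.val_injective
    rw [insLast_castSucc, val_succAbove, P.step ω n i]

lemma p_eq_g (P : QMallowsProcess Ω ℙ q) (ω : Ω) (n : ℕ) :
    P.p n ω = gPerm n (fun i : Fin n => ((P.p ((i : ℕ)+1) ω (Fin.last i) : ℕ))) := by
  induction n with
  | zero =>
    apply Equiv.ext
    intro i
    exact i.elim0
  | succ n ih =>
    rw [p_succ_eq P ω n, gPerm]
    congr 1
    have h : ((P.p (n+1) ω (Fin.last n) : ℕ)) < n + 1 := (P.p (n+1) ω (Fin.last n)).isLt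
    simp only [Fin.val_last]
    rw [dif_pos h]



end MallowsAux

/-- **Lemma 2.1.** For `q > 0`, the `n`-th permutation of the `q`-Mallows process is
distributed according to the Mallows measure `μ_{n, 1/q}`. -/
theorem qMallowsProcess_isMallows
    {Ω : Type*} [MeasurableSpace Ω] (ℙ : Measure Ω) [IsProbabilityMeasure ℙ]
    (q : ℝ) (hq : 0 < q) (P : QMallowsProcess Ω ℙ q) (n : ℕ) :
    IsMallows ℙ (1 / q) (P.p n) := by
  have hq1 : q ≠ 1 := by
    intro h
    have hd := P.dist 0 0
    have huniv : {ω | P.p 1 ω (Fin.last 0) = 0} = Set.univ :=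
      Set.eq_univ_of_forall (fun ω => Subsingleton.elim _ _)
    rw [huniv] at hd
    simp [h] at hd
  induction n with
  | zero =>
    intro σ
    have huniv : {ω | P.p 0 ω = σ} = Set.univ :=
      Set.eq_univ_of_forall (fun ω => by apply Equiv.ext; intro i; exact i.elim0)
    rw [huniv]
    simp only [measure_univ, ENNReal.toReal_one]
    haveI : Subsingleton (Equiv.Perm (Fin 0)) :=
      ⟨fun a b => by apply Equiv.ext; intro i; exact i.elim0⟩
    rw [mallowsProb, Fintype.sum_subsingleton _ σ, div_self (by positivity)]
  | succ n ih =>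
    intro σ
    obtain ⟨⟨τ, j⟩, rfl⟩ := (insEquiv n).surjective σ
    show (ℙ {ω | P.p (n+1) ω = insLast τ j}).toReal = mallowsProb (n+1) (1/q) (insLast τ j)
    have hset : {ω | P.p (n+1) ω = insLast τ j} =
        {ω | P.p n ω = τ} ∩ {ω | P.p (n+1) ω (Fin.last n) = j} := by
      ext ω
      simp only [Set.mem_setOf_eq, Set.mem_inter_iff]
      constructor
      · intro h
        have h2 : insLast (P.p n ω) (P.p (n+1) ω (Fin.last n)) = insLast τ j := by
          rw [← p_succ_eq P ω n]; exact h
        have h3 := insLast_injective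
          (a₁ := (P.p n ω, P.p (n+1) ω (Fin.last n))) (a₂ := (τ, j)) h2
        exact ⟨congrArg Prod.fst h3, congrArg Prod.snd h3⟩
      · rintro ⟨h1, h2⟩
        rw [p_succ_eq P ω n, h1, h2]
    set S := Finset.range n with hS
    set T : Finset ℕ := {n} with hT
    have hdisj : Disjoint S T := by
      simp [hS, hT, Finset.disjoint_singleton_right]
    have hIndep := P.indep.indepFun_finset S T hdisj P.meas
    set sA : Set (↥S → ℕ) :=
      {v | gPerm n (fun i : Fin n => v ⟨(i : ℕ), Finset.mem_range.mpr i.isLt⟩) = τ} with hsA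
    set sB : Set (↥T → ℕ) :=
      {w | w ⟨n, Finset.mem_singleton_self n⟩ = (j : ℕ)} with hsB
    set Xf : Ω → ↥S → ℕ :=
      fun ω i => ((P.p ((i : ℕ) + 1) ω (Fin.last (i : ℕ)) : ℕ)) with hXf
    set Yf : Ω → ↥T → ℕ :=
      fun ω i => ((P.p ((i : ℕ) + 1) ω (Fin.last (i : ℕ)) : ℕ)) with hYf
    have hA : {ω | P.p n ω = τ} = Xf ⁻¹' sA := by
      ext ω
      simp only [Set.mem_setOf_eq, Set.mem_preimage, hsA, hXf]
      have hg := p_eq_g P ω n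
      exact ⟨fun h => (hg.symm.trans h : _), fun h => (hg.trans h : _)⟩
    have hB : {ω | P.p (n+1) ω (Fin.last n) = j} = Yf ⁻¹' sB := by
      ext ω
      simp only [Set.mem_setOf_eq, Set.mem_preimage, hsB, hYf]
      exact ⟨fun h => congrArg Fin.val h, fun h => Fin.val_injective h⟩
    have hmul : ℙ (Xf ⁻¹' sA ∩ Yf ⁻¹' sB) = ℙ (Xf ⁻¹' sA) * ℙ (Yf ⁻¹' sB) :=
      hIndep.measure_inter_preimage_eq_mul sA sB (meas_all sA) (meas_all sB)
    rw [hset, hA, hB, hmul, ENNReal.toReal_mul, ← hA, ← hB, ih τ, P.dist n j,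
      mallows_rec hq hq1 n τ j]
end

section
/- Let q > 0 and let (p_n)_{n ≥ 1} be the q-Mallows process. Then for every n and every 1 ≤ i ≤ n, deterministically (for every realization of the process), i - p_i(i) = #{t : 1 ≤ t ≤ i and p_n(t) > p_n(i)}. -/
open MeasureTheory Filter

lemma perm_gt_card {m : ℕ} (e : Equiv.Perm (Fin m)) (v : Fin m) :
    (Finset.univ.filter fun t => e v < e t).card = m - 1 - (e v : ℕ) := by
  have h1 : (Finset.univ.filter fun t => e v < e t) =
      (Finset.univ.filter fun s => e v < s).map e.symm.toEmbedding := by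
    ext t
    simp [Finset.mem_map, Equiv.symm_apply_eq]
  rw [h1, Finset.card_map]
  have : (Finset.univ.filter fun s => e v < s) = Finset.Ioi (e v) := by
    ext s; simp
  rw [this, Fin.card_Ioi]


/-- **Lemma 2.2.** For the `q`-Mallows process, deterministically, for all `1 ≤ i ≤ n`,
`i - p_i(i) = #{t : 1 ≤ t ≤ i, p_n(t) > p_n(i)}`.  (Here indices are `0`-based: the index
`i : Fin n` corresponds to the paper's index `i+1`, and `p_{i+1}(i+1)` is
`(P.p (i+1) ω (Fin.last i) : ℕ) + 1`; both sides of the paper's identity equal the two sides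
below.) -/
theorem qMallowsProcess_initial_rank
    {Ω : Type*} [MeasurableSpace Ω] (ℙ : Measure Ω) [IsProbabilityMeasure ℙ]
    (q : ℝ) (hq : 0 < q) (P : QMallowsProcess Ω ℙ q) :
    ∀ (ω : Ω) (n : ℕ) (i : Fin n),
      (i : ℕ) - ((P.p ((i : ℕ) + 1) ω (Fin.last (i : ℕ))) : ℕ) =
        (Finset.univ.filter fun t : Fin n => t ≤ i ∧ P.p n ω i < P.p n ω t).card := by
  intro ω n
  induction n with
  | zero => exact fun i => i.elim0
  | succ n ih =>
    intro i
    induction i using Fin.lastCases with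
    | last =>
      have hfil : (Finset.univ.filter fun t : Fin (n+1) =>
          t ≤ Fin.last n ∧ P.p (n+1) ω (Fin.last n) < P.p (n+1) ω t) =
          (Finset.univ.filter fun t : Fin (n+1) =>
          P.p (n+1) ω (Fin.last n) < P.p (n+1) ω t) := by
        apply Finset.filter_congr
        intro t _
        simp [Fin.le_last]
      simp only [Fin.val_last]
      rw [hfil, perm_gt_card]
      simp
    | cast j =>
      have key : ∀ a b : Fin n,
          (P.p (n+1) ω a.castSucc < P.p (n+1) ω b.castSucc ↔ P.p n ω a < P.p n ω b) := by
        intro a b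
        have ha := P.step ω n a
        have hb := P.step ω n b
        rw [Fin.lt_iff_val_lt_val, Fin.lt_iff_val_lt_val, ha, hb]
        split_ifs <;> omega
      have hcard : (Finset.univ.filter fun t : Fin (n+1) =>
          t ≤ j.castSucc ∧ P.p (n+1) ω j.castSucc < P.p (n+1) ω t) =
          (Finset.univ.filter fun t : Fin n =>
          t ≤ j ∧ P.p n ω j < P.p n ω t).map Fin.castSuccEmb := by
        ext t
        simp only [Finset.mem_filter, Finset.mem_univ, true_and, Finset.mem_map,
          Fin.castSuccEmb_apply]
        constructor
        · rintro ⟨hle, hlt⟩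
          have htlast : t ≠ Fin.last n := by
            intro h; subst h
            exact absurd hle (not_le.mpr (Fin.castSucc_lt_last j))
          obtain ⟨s, rfl⟩ := Fin.exists_castSucc_eq.mpr htlast
          exact ⟨s, ⟨Fin.castSucc_le_castSucc_iff.mp hle, (key j s).mp hlt⟩, rfl⟩
        · rintro ⟨s, ⟨hle, hlt⟩, rfl⟩
          exact ⟨Fin.castSucc_le_castSucc_iff.mpr hle, (key j s).mpr hlt⟩
      rw [show ((j.castSucc : Fin (n+1)) : ℕ) = (j : ℕ) from rfl]
      rw [hcard, Finset.card_map]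
      exact ih j
end

section
/- Let q > 0 and let (p_n)_{n ≥ 1} be the q-Mallows process. Then for every n and every 1 ≤ i ≤ n, deterministically, p_n(i) = p_i(i) + n - i - #{t : i+1 ≤ t ≤ n, p_n(t) > p_n(i)}. Moreover, if k ∈ [n] \ {p_n(t) : i+1 ≤ t ≤ n} satisfies k = p_i(i) + n - i - #{t : i+1 ≤ t ≤ n, p_n(t) > k}, then k = p_n(i). -/
open MeasureTheory Filter

section Aux
variable {Ω : Type*} [MeasurableSpace Ω] {ℙ : Measure Ω} {q : ℝ}

lemma qm_lt_step (P : QMallowsProcess Ω ℙ q) (ω : Ω) (n : ℕ) (a b : Fin n) :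
    (P.p n ω a : ℕ) < (P.p n ω b : ℕ) ↔
      (P.p (n+1) ω a.castSucc : ℕ) < (P.p (n+1) ω b.castSucc : ℕ) := by
  rw [P.step ω n a, P.step ω n b]
  split_ifs <;> omega

lemma qm_lt_castLE (P : QMallowsProcess Ω ℙ q) (ω : Ω) {m n : ℕ} (h : m ≤ n) (a b : Fin m) :
    ((P.p m ω a : ℕ) < (P.p m ω b : ℕ)) ↔
      (P.p n ω (a.castLE h) : ℕ) < (P.p n ω (b.castLE h) : ℕ) := by
  induction n, h using Nat.le_induction with
  | base => rfl
  | succ n hmn ih =>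
    rw [ih]
    have ha : (a.castLE (Nat.le_succ_of_le hmn)) = (a.castLE hmn).castSucc := rfl
    have hb : (b.castLE (Nat.le_succ_of_le hmn)) = (b.castLE hmn).castSucc := rfl
    rw [ha, hb, ← qm_lt_step]

lemma qm_card_perm {n : ℕ} (π : Equiv.Perm (Fin n)) (pred : Fin n → Prop) [DecidablePred pred] :
    (Finset.univ.filter fun t => pred (π t)).card = (Finset.univ.filter pred).card := by
  apply Finset.card_bij (fun t _ => π t)
  · intro a ha; simp_all
  · intro a _ b _ hab; exact π.injective hab
  · intro y hy
    refine ⟨π.symm y, ?_, by simp⟩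
    simp only [Finset.mem_filter, Finset.mem_univ, true_and] at hy ⊢
    simpa using hy

lemma qm_card_lt {n : ℕ} (c : Fin n) :
    (Finset.univ.filter fun y : Fin n => y < c).card = (c : ℕ) := by
  have : (Finset.univ.filter fun y : Fin n => y < c) = Finset.Iio c := by
    ext y; simp
  rw [this, Fin.card_Iio]

lemma qm_card_gt {n : ℕ} (c : Fin n) :
    (Finset.univ.filter fun y : Fin n => c < y).card + (c : ℕ) + 1 = n := by
  have : (Finset.univ.filter fun y : Fin n => c < y) = Finset.Ioi c := by
    ext y; simp
  rw [this, Fin.card_Ioi]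
  omega

/-- rank lemma -/
lemma qm_rank (P : QMallowsProcess Ω ℙ q) (ω : Ω) (n : ℕ) (i : Fin n) :
    (Finset.univ.filter fun t : Fin n => t < i ∧ (P.p n ω t : ℕ) < (P.p n ω i : ℕ)).card
      = (P.p ((i : ℕ)+1) ω (Fin.last i) : ℕ) := by
  have hin : (i : ℕ) + 1 ≤ n := i.isLt
  set m := (i : ℕ) + 1 with hm
  set π := P.p m ω with hπ
  -- step 1: in Fin m
  have h1 : (Finset.univ.filter fun t : Fin m =>
      t < Fin.last i ∧ (π t : ℕ) < (π (Fin.last i) : ℕ)).card = (π (Fin.last i) : ℕ) := by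
    have heq : (Finset.univ.filter fun t : Fin m =>
        t < Fin.last i ∧ (π t : ℕ) < (π (Fin.last i) : ℕ))
        = Finset.univ.filter fun t : Fin m => π t < π (Fin.last i) := by
      apply Finset.filter_congr
      intro t _
      constructor
      · rintro ⟨-, h⟩; exact h
      · intro h
        refine ⟨?_, h⟩
        have : t ≠ Fin.last i := by
          intro he; subst he; omega
        exact Fin.lt_last_iff_ne_last.mpr this
    rw [heq, qm_card_perm π (fun y => y < π (Fin.last i)), qm_card_lt]
  -- step 2: bijection to Fin n
  rw [← h1]
  apply Finset.card_bij (fun (t : Fin n) _ => (⟨(t : ℕ), by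
    rename_i ht
    simp only [Finset.mem_filter, Finset.mem_univ, true_and] at ht
    omega⟩ : Fin m))
  · intro t ht
    simp only [Finset.mem_filter, Finset.mem_univ, true_and] at ht ⊢
    obtain ⟨htl, htv⟩ := ht
    have h2 : (t : ℕ) < (i : ℕ) := htl
    constructor
    · exact h2
    · have hc : ∀ (a : Fin m), a.castLE hin = ⟨(a : ℕ), by omega⟩ := fun a => rfl
      have := (qm_lt_castLE P ω hin (⟨(t : ℕ), by omega⟩ : Fin m) (Fin.last i)).mpr
      apply this
      have hl : ((Fin.last (i : ℕ)).castLE hin) = i := by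
        ext; rfl
      rw [hl]
      convert htv using 3
      rfl
  · intro a ha b hb hab
    have := congrArg Fin.val hab
    simp only at this
    exact Fin.ext this
  · intro s hs
    simp only [Finset.mem_filter, Finset.mem_univ, true_and] at hs
    obtain ⟨hsl, hsv⟩ := hs
    have h2 : (s : ℕ) < (i : ℕ) := hsl
    refine ⟨⟨(s : ℕ), by omega⟩, ?_, rfl⟩
    simp only [Finset.mem_filter, Finset.mem_univ, true_and]
    constructor
    · exact h2
    · have := (qm_lt_castLE P ω hin (⟨(s : ℕ), by omega⟩ : Fin m) (Fin.last i)).mp hsv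
      have hl : ((Fin.last (i : ℕ)).castLE hin) = i := by ext; rfl
      rw [hl] at this
      convert this using 3
      rfl

lemma qm_strict (P : QMallowsProcess Ω ℙ q) (ω : Ω) (n : ℕ) (i a b : Fin n)
    (hab : a < b) (hb : ∀ t : Fin n, i < t → P.p n ω t ≠ b) :
    (a : ℕ) + (Finset.univ.filter fun t : Fin n => i < t ∧ a < P.p n ω t).card
      < (b : ℕ) + (Finset.univ.filter fun t : Fin n => i < t ∧ b < P.p n ω t).card := by
  set s := Finset.univ.filter fun t : Fin n => i < t ∧ a < P.p n ω t with hs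
  have hsplit := Finset.card_filter_add_card_filter_not
    (s := s) (p := fun t => b < P.p n ω t)
  have h1 : s.filter (fun t => b < P.p n ω t)
      = Finset.univ.filter fun t : Fin n => i < t ∧ b < P.p n ω t := by
    ext t
    simp only [hs, Finset.mem_filter, Finset.mem_univ, true_and]
    constructor
    · rintro ⟨⟨ht1, _⟩, ht3⟩; exact ⟨ht1, ht3⟩
    · rintro ⟨ht1, ht3⟩; exact ⟨⟨ht1, lt_trans hab ht3⟩, ht3⟩
  have h2 : (s.filter (fun t => ¬ b < P.p n ω t)).card ≤ (b : ℕ) - (a : ℕ) - 1 := by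
    have hmaps : ∀ t ∈ s.filter (fun t => ¬ b < P.p n ω t),
        ((P.p n ω t : ℕ)) ∈ Finset.Ioo (a : ℕ) (b : ℕ) := by
      intro t ht
      simp only [hs, Finset.mem_filter, Finset.mem_univ, true_and] at ht
      obtain ⟨⟨hti, hta⟩, htb⟩ := ht
      have hne : P.p n ω t ≠ b := hb t hti
      rw [Finset.mem_Ioo]
      have h3 : (a : ℕ) < (P.p n ω t : ℕ) := hta
      have h4 : ¬ (b : ℕ) < (P.p n ω t : ℕ) := htb
      have h5 : (P.p n ω t : ℕ) ≠ (b : ℕ) := fun he => hne (Fin.ext he)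
      omega
    have hinj : ∀ t₁ ∈ s.filter (fun t => ¬ b < P.p n ω t),
        ∀ t₂ ∈ s.filter (fun t => ¬ b < P.p n ω t),
        (P.p n ω t₁ : ℕ) = (P.p n ω t₂ : ℕ) → t₁ = t₂ := by
      intro t₁ _ t₂ _ h
      exact (P.p n ω).injective (Fin.ext h)
    calc (s.filter (fun t => ¬ b < P.p n ω t)).card
        ≤ (Finset.Ioo (a : ℕ) (b : ℕ)).card :=
          Finset.card_le_card_of_injOn _ hmaps hinj
      _ = (b : ℕ) - (a : ℕ) - 1 := Nat.card_Ioo _ _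
  rw [h1] at hsplit
  have hab' : (a : ℕ) < (b : ℕ) := hab
  omega

end Aux

/-- **Lemma 2.4.** For the `q`-Mallows process, deterministically, for `1 ≤ i ≤ n`:
`p_n(i) = p_i(i) + n - i - #{t : i+1 ≤ t ≤ n, p_n(t) > p_n(i)}` (stated in `ℤ`), and moreover
if `k ∈ [n] \ {p_n(t) : i+1 ≤ t ≤ n}` satisfies
`k = p_i(i) + n - i - #{t : i+1 ≤ t ≤ n, p_n(t) > k}` then `k = p_n(i)`.
(Indices and values are `0`-based; the paper's `1`-based value of `p_n(i)` is
`(P.p n ω i : ℕ) + 1`, and `p_i(i)` is `(P.p (i+1) ω (Fin.last i) : ℕ) + 1`.) -/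
theorem qMallowsProcess_value_formula
    {Ω : Type*} [MeasurableSpace Ω] (ℙ : Measure Ω) [IsProbabilityMeasure ℙ]
    (q : ℝ) (hq : 0 < q) (P : QMallowsProcess Ω ℙ q) :
    ∀ (ω : Ω) (n : ℕ) (i : Fin n),
      ((((P.p n ω i : ℕ) + 1 : ℕ) : ℤ) =
        (((P.p ((i : ℕ) + 1) ω (Fin.last (i : ℕ)) : ℕ) + 1 : ℕ) : ℤ) + (n : ℤ) - ((i : ℕ) + 1 : ℤ)
          - ((Finset.univ.filter fun t : Fin n => i < t ∧ P.p n ω i < P.p n ω t).card : ℤ))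
      ∧ ∀ k : Fin n, (∀ t : Fin n, i < t → P.p n ω t ≠ k) →
          ((((k : ℕ) + 1 : ℕ) : ℤ) =
            (((P.p ((i : ℕ) + 1) ω (Fin.last (i : ℕ)) : ℕ) + 1 : ℕ) : ℤ)
              + (n : ℤ) - ((i : ℕ) + 1 : ℤ)
              - ((Finset.univ.filter fun t : Fin n => i < t ∧ k < P.p n ω t).card : ℤ)) →
          P.p n ω i = k := by
  intro ω n i
  -- the rank fact
  have hC1 : (Finset.univ.filter fun t : Fin n => t < i ∧ P.p n ω t < P.p n ω i).card
      = (P.p ((i : ℕ)+1) ω (Fin.last i) : ℕ) := by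
    rw [← qm_rank P ω n i]
    apply congrArg Finset.card
    apply Finset.filter_congr
    intro t _
    exact and_congr Iff.rfl Fin.lt_def
  -- split over t < i
  have hsplitA : (Finset.univ.filter fun t : Fin n => t < i ∧ P.p n ω t < P.p n ω i).card
      + (Finset.univ.filter fun t : Fin n => t < i ∧ P.p n ω i < P.p n ω t).card = (i : ℕ) := by
    have hbase := Finset.card_filter_add_card_filter_not
      (s := Finset.univ.filter fun t : Fin n => t < i) (p := fun t => P.p n ω t < P.p n ω i)
    have e1 : (Finset.univ.filter fun t : Fin n => t < i).filter
        (fun t => P.p n ω t < P.p n ω i)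
        = Finset.univ.filter fun t : Fin n => t < i ∧ P.p n ω t < P.p n ω i := by
      rw [Finset.filter_filter]
    have e2 : (Finset.univ.filter fun t : Fin n => t < i).filter
        (fun t => ¬ P.p n ω t < P.p n ω i)
        = Finset.univ.filter fun t : Fin n => t < i ∧ P.p n ω i < P.p n ω t := by
      rw [Finset.filter_filter]
      apply Finset.filter_congr
      intro t _
      constructor
      · rintro ⟨ht, hnlt⟩
        refine ⟨ht, ?_⟩
        rcases lt_or_gt_of_ne (fun he : P.p n ω t = P.p n ω i =>
          (ne_of_lt ht) ((P.p n ω).injective he)) with h | h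
        · exact absurd h hnlt
        · exact h
      · rintro ⟨ht, hgt⟩; exact ⟨ht, not_lt_of_gt hgt⟩
    rw [e1, e2, qm_card_lt] at hbase
    exact hbase
  -- split the "greater" set by position
  have hsplitB : (Finset.univ.filter fun t : Fin n => t < i ∧ P.p n ω i < P.p n ω t).card
      + (Finset.univ.filter fun t : Fin n => i < t ∧ P.p n ω i < P.p n ω t).card
      = (Finset.univ.filter fun t : Fin n => P.p n ω i < P.p n ω t).card := by
    have hbase := Finset.card_filter_add_card_filter_not
      (s := Finset.univ.filter fun t : Fin n => P.p n ω i < P.p n ω t) (p := fun t => t < i)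
    have e1 : (Finset.univ.filter fun t : Fin n => P.p n ω i < P.p n ω t).filter
        (fun t => t < i)
        = Finset.univ.filter fun t : Fin n => t < i ∧ P.p n ω i < P.p n ω t := by
      rw [Finset.filter_filter]
      apply Finset.filter_congr
      intro t _
      exact and_comm
    have e2 : (Finset.univ.filter fun t : Fin n => P.p n ω i < P.p n ω t).filter
        (fun t => ¬ t < i)
        = Finset.univ.filter fun t : Fin n => i < t ∧ P.p n ω i < P.p n ω t := by
      rw [Finset.filter_filter]
      apply Finset.filter_congr
      intro t _
      constructor
      · rintro ⟨hv, hnlt⟩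
        refine ⟨?_, hv⟩
        have : t ≠ i := fun he => by subst he; exact lt_irrefl _ hv
        rcases lt_or_gt_of_ne this with h | h
        · exact absurd h hnlt
        · exact h
      · rintro ⟨ht, hv⟩; exact ⟨hv, not_lt_of_gt ht⟩
    rw [e1, e2] at hbase
    exact hbase
  -- total count of larger values
  have htotal : (Finset.univ.filter fun t : Fin n => P.p n ω i < P.p n ω t).card
      + (P.p n ω i : ℕ) + 1 = n := by
    rw [qm_card_perm (P.p n ω) (fun y => P.p n ω i < y)]
    exact qm_card_gt (P.p n ω i)
  have part1 : (((P.p n ω i : ℕ) + 1 : ℕ) : ℤ) =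
      (((P.p ((i : ℕ) + 1) ω (Fin.last (i : ℕ)) : ℕ) + 1 : ℕ) : ℤ) + (n : ℤ) - ((i : ℕ) + 1 : ℤ)
        - ((Finset.univ.filter fun t : Fin n => i < t ∧ P.p n ω i < P.p n ω t).card : ℤ) := by
    omega
  refine ⟨part1, ?_⟩
  intro k hk hkeq
  rcases lt_trichotomy (P.p n ω i) k with h | h | h
  · exfalso
    have := qm_strict P ω n i (P.p n ω i) k h hk
    omega
  · exact h
  · exfalso
    have hbi : ∀ t : Fin n, i < t → P.p n ω t ≠ P.p n ω i := by
      intro t ht he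
      exact (ne_of_gt ht) ((P.p n ω).injective he)
    have := qm_strict P ω n i k (P.p n ω i) h hbi
    omega
end

section
/- Let a = (a_1, …, a_k) and b = (b_1, …, b_l) be two increasing sequences of indices in [n] with a_k < b_1, and let q > 0. If π ~ μ_{n,q}, then the random permutation π_a and the random vector π(b) are independent, and the random vector π(a) and the random permutation π_b are independent. -/
open MeasureTheory Filter

/-- `inducedEqOn π a σ` says that the induced permutation `π_a ∈ S_k` equals `σ`:
`π_a(i) = j` iff `π(a_i)` is the `j`-th smallest among `π(a_1), …, π(a_k)`, which with
`0`-based values reads `(σ i : ℕ) = #{l | π (a l) < π (a i)}`. -/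
def inducedEqOn {n k : ℕ} (π : Equiv.Perm (Fin n)) (a : Fin k → Fin n)
    (σ : Equiv.Perm (Fin k)) : Prop :=
  ∀ i : Fin k, (Finset.univ.filter fun l : Fin k => π (a l) < π (a i)).card = (σ i : ℕ)


namespace MallowsAux
open Finset

variable {n : ℕ}

def cnt (π : Equiv.Perm (Fin n)) (j : Fin n) : ℕ :=
  (Finset.univ.filter fun i : Fin n => i < j ∧ π j < π i).card

lemma inversions_eq_sum (π : Equiv.Perm (Fin n)) :
    inversions π = ∑ j : Fin n, cnt π j := by
  classical
  unfold inversions cnt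
  rw [Finset.card_filter, Fintype.sum_prod_type, Finset.sum_comm]
  refine Finset.sum_congr rfl fun j _ => ?_
  rw [Finset.card_filter]

lemma card_filter_lt_apply (π : Equiv.Perm (Fin n)) (c : Fin n) :
    (Finset.univ.filter fun i : Fin n => c < π i).card
      = (Finset.univ.filter fun x : Fin n => c < x).card := by
  refine Finset.card_nbij' (fun i => π i) (fun x => π.symm x) ?_ ?_ ?_ ?_ <;>
    intro x hx <;> simp_all

/-- split of inversions at threshold m -/
lemma inversions_split (m : ℕ) (π : Equiv.Perm (Fin n)) :
    inversions π =
      ∑ j ∈ Finset.univ.filter (fun j : Fin n => (j : ℕ) < m), cnt π j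
      + ∑ j ∈ Finset.univ.filter (fun j : Fin n => ¬ (j : ℕ) < m), cnt π j := by
  rw [inversions_eq_sum, Finset.sum_filter_add_sum_filter_not]

/-- prefix part only depends on the relative order on the prefix -/
lemma prefix_sum_congr (m : ℕ) (π ρ : Equiv.Perm (Fin n))
    (h : ∀ i i' : Fin n, (i : ℕ) < m → (i' : ℕ) < m → (π i < π i' ↔ ρ i < ρ i')) :
    ∑ j ∈ Finset.univ.filter (fun j : Fin n => (j : ℕ) < m), cnt π j
      = ∑ j ∈ Finset.univ.filter (fun j : Fin n => (j : ℕ) < m), cnt ρ j := by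
  refine Finset.sum_congr rfl fun j hj => ?_
  simp only [Finset.mem_filter] at hj
  unfold cnt
  congr 1
  refine Finset.filter_congr fun i _ => ?_
  constructor <;> rintro ⟨h1, h2⟩ <;> refine ⟨h1, ?_⟩
  · exact (h j i hj.2 (lt_trans (Fin.lt_iff_val_lt_val.mp h1) hj.2)).mp h2
  · exact (h j i hj.2 (lt_trans (Fin.lt_iff_val_lt_val.mp h1) hj.2)).mpr h2

/-- the key identity: for suffix j, cnt + (suffix count of larger values) is determined by
value at j and suffix values -/
lemma cnt_add_eq (m : ℕ) (π : Equiv.Perm (Fin n)) (j : Fin n) (hj : m ≤ (j : ℕ)) :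
    cnt π j + (Finset.univ.filter fun i : Fin n => π j < π i ∧ ¬ (i : ℕ) < m).card
      = (Finset.univ.filter fun x : Fin n => π j < x).card
        + (Finset.univ.filter fun i : Fin n => i < j ∧ π j < π i ∧ ¬ (i : ℕ) < m).card := by
  classical
  have hsplit : cnt π j =
      (Finset.univ.filter fun i : Fin n => (i < j ∧ π j < π i) ∧ (i : ℕ) < m).card
      + (Finset.univ.filter fun i : Fin n => (i < j ∧ π j < π i) ∧ ¬ (i : ℕ) < m).card := by
    unfold cnt
    have := Finset.card_filter_add_card_filter_not
      (s := Finset.univ.filter (fun i : Fin n => i < j ∧ π j < π i))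
      (p := fun i : Fin n => (i : ℕ) < m)
    rw [Finset.filter_filter, Finset.filter_filter] at this
    omega
  have h1 : (Finset.univ.filter fun i : Fin n => (i < j ∧ π j < π i) ∧ (i : ℕ) < m).card
      = (Finset.univ.filter fun i : Fin n => π j < π i ∧ (i : ℕ) < m).card := by
    congr 1
    refine Finset.filter_congr fun i _ => ?_
    constructor
    · rintro ⟨⟨_, h2⟩, h3⟩; exact ⟨h2, h3⟩
    · rintro ⟨h2, h3⟩; exact ⟨⟨Fin.lt_iff_val_lt_val.mpr (lt_of_lt_of_le h3 hj), h2⟩, h3⟩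
  have h2 : (Finset.univ.filter fun i : Fin n => π j < π i ∧ (i : ℕ) < m).card
      + (Finset.univ.filter fun i : Fin n => π j < π i ∧ ¬ (i : ℕ) < m).card
      = (Finset.univ.filter fun x : Fin n => π j < x).card := by
    have := Finset.card_filter_add_card_filter_not
      (s := Finset.univ.filter (fun i : Fin n => π j < π i))
      (p := fun i : Fin n => (i : ℕ) < m)
    rw [Finset.filter_filter, Finset.filter_filter] at this
    rw [← card_filter_lt_apply π (π j)]
    omega
  have h3 : (Finset.univ.filter fun i : Fin n => (i < j ∧ π j < π i) ∧ ¬ (i : ℕ) < m).card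
      = (Finset.univ.filter fun i : Fin n => i < j ∧ π j < π i ∧ ¬ (i : ℕ) < m).card := by
    congr 1; apply Finset.filter_congr; intro i _; tauto
  omega

/-- suffix part only depends on the values on the suffix -/
lemma suffix_sum_congr (m : ℕ) (π ρ : Equiv.Perm (Fin n))
    (h : ∀ j : Fin n, m ≤ (j : ℕ) → π j = ρ j) :
    ∑ j ∈ Finset.univ.filter (fun j : Fin n => ¬ (j : ℕ) < m), cnt π j
      = ∑ j ∈ Finset.univ.filter (fun j : Fin n => ¬ (j : ℕ) < m), cnt ρ j := by
  classical
  have key : ∀ j ∈ Finset.univ.filter (fun j : Fin n => ¬ (j : ℕ) < m),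
      cnt π j + (Finset.univ.filter fun i : Fin n => π j < π i ∧ ¬ (i : ℕ) < m).card
      = cnt ρ j + (Finset.univ.filter fun i : Fin n => ρ j < ρ i ∧ ¬ (i : ℕ) < m).card := by
    intro j hj
    simp only [Finset.mem_filter] at hj
    have hjm : m ≤ (j : ℕ) := Nat.le_of_not_lt hj.2
    rw [cnt_add_eq m π j hjm, cnt_add_eq m ρ j hjm]
    have e1 : (Finset.univ.filter fun x : Fin n => π j < x)
        = (Finset.univ.filter fun x : Fin n => ρ j < x) := by rw [h j hjm]
    have e2 : (Finset.univ.filter fun i : Fin n => i < j ∧ π j < π i ∧ ¬ (i : ℕ) < m)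
        = (Finset.univ.filter fun i : Fin n => i < j ∧ ρ j < ρ i ∧ ¬ (i : ℕ) < m) := by
      apply Finset.filter_congr; intro i _
      constructor <;> rintro ⟨h1, h2, h3⟩ <;>
        exact ⟨h1, by rw [h j hjm, h i (Nat.le_of_not_lt h3)] at *; exact h2, h3⟩
    rw [e1, e2]
  have hs : ∀ j ∈ Finset.univ.filter (fun j : Fin n => ¬ (j : ℕ) < m),
      (Finset.univ.filter fun i : Fin n => π j < π i ∧ ¬ (i : ℕ) < m).card
      = (Finset.univ.filter fun i : Fin n => ρ j < ρ i ∧ ¬ (i : ℕ) < m).card := by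
    intro j hj
    simp only [Finset.mem_filter] at hj
    have hjm : m ≤ (j : ℕ) := Nat.le_of_not_lt hj.2
    congr 1
    apply Finset.filter_congr; intro i _
    constructor <;> rintro ⟨h2, h3⟩ <;>
      exact ⟨by rw [h j hjm, h i (Nat.le_of_not_lt h3)] at *; exact h2, h3⟩
  have hsum := Finset.sum_congr rfl key
  rw [Finset.sum_add_distrib, Finset.sum_add_distrib] at hsum
  have hsum2 := Finset.sum_congr rfl hs
  omega

/-- prefix positions -/
def pref (n m : ℕ) : Finset (Fin n) := Finset.univ.filter fun i : Fin n => (i : ℕ) < m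

lemma card_image_pref (m : ℕ) (π : Equiv.Perm (Fin n)) :
    ((pref n m).image π).card = (pref n m).card :=
  Finset.card_image_of_injective _ π.injective

lemma mem_image_pref (m : ℕ) (π : Equiv.Perm (Fin n)) {i : Fin n} (hi : (i : ℕ) < m) :
    π i ∈ (pref n m).image π :=
  Finset.mem_image_of_mem _ (by simp [pref, hi])

noncomputable def mixFun (m : ℕ) (π τ : Equiv.Perm (Fin n)) (i : Fin n) : Fin n :=
  if h : (i : ℕ) < m then
    (((pref n m).image τ).orderIsoOfFin (card_image_pref m τ)
      ((((pref n m).image π).orderIsoOfFin (card_image_pref m π)).symm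
        ⟨π i, mem_image_pref m π h⟩) : Fin n)
  else τ i

lemma mixFun_mem (m : ℕ) (π τ : Equiv.Perm (Fin n)) {i : Fin n} (hi : (i : ℕ) < m) :
    mixFun m π τ i ∈ (pref n m).image τ := by
  rw [mixFun, dif_pos hi]; exact Finset.coe_mem _

lemma mixFun_suffix (m : ℕ) (π τ : Equiv.Perm (Fin n)) {i : Fin n} (hi : ¬ (i : ℕ) < m) :
    mixFun m π τ i = τ i := dif_neg hi

lemma not_mem_image_pref (m : ℕ) (τ : Equiv.Perm (Fin n)) {i : Fin n} (hi : ¬ (i : ℕ) < m) :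
    τ i ∉ (pref n m).image τ := by
  intro hmem
  rcases Finset.mem_image.mp hmem with ⟨i0, hi0, he⟩
  have : i0 = i := τ.injective he
  subst this
  simp [pref] at hi0
  exact hi hi0

lemma mixFun_injective (m : ℕ) (π τ : Equiv.Perm (Fin n)) :
    Function.Injective (mixFun m π τ) := by
  intro i i' he
  by_cases hi : (i : ℕ) < m <;> by_cases hi' : (i' : ℕ) < m
  · rw [mixFun, dif_pos hi, mixFun, dif_pos hi'] at he
    have h1 := Subtype.coe_injective he
    have h2 := OrderIso.injective _ h1
    have h3 := OrderIso.injective _ h2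
    exact π.injective (Subtype.mk_eq_mk.mp h3)
  · exfalso
    have h1 := mixFun_mem m π τ hi
    rw [he, mixFun_suffix m π τ hi'] at h1
    exact not_mem_image_pref m τ hi' h1
  · exfalso
    have h1 := mixFun_mem m π τ hi'
    rw [← he, mixFun_suffix m π τ hi] at h1
    exact not_mem_image_pref m τ hi h1
  · rw [mixFun_suffix m π τ hi, mixFun_suffix m π τ hi'] at he
    exact τ.injective he

noncomputable def mix (m : ℕ) (π τ : Equiv.Perm (Fin n)) : Equiv.Perm (Fin n) :=
  Equiv.ofBijective (mixFun m π τ)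
    (Finite.injective_iff_bijective.mp (mixFun_injective m π τ))

lemma mix_apply (m : ℕ) (π τ : Equiv.Perm (Fin n)) (i : Fin n) :
    mix m π τ i = mixFun m π τ i := rfl

lemma mix_suffix (m : ℕ) (π τ : Equiv.Perm (Fin n)) {i : Fin n} (hi : m ≤ (i : ℕ)) :
    mix m π τ i = τ i := mixFun_suffix m π τ (Nat.not_lt.mpr hi)

lemma mix_lt_iff (m : ℕ) (π τ : Equiv.Perm (Fin n)) {i i' : Fin n}
    (hi : (i : ℕ) < m) (hi' : (i' : ℕ) < m) :
    (mix m π τ i < mix m π τ i' ↔ π i < π i') := by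
  rw [mix_apply, mix_apply, mixFun, dif_pos hi, mixFun, dif_pos hi']
  simp only [Subtype.coe_lt_coe, OrderIso.lt_iff_lt, Subtype.mk_lt_mk]

lemma image_pref_mix (m : ℕ) (π τ : Equiv.Perm (Fin n)) :
    (pref n m).image (mix m π τ) = (pref n m).image τ := by
  apply Finset.eq_of_subset_of_card_le
  · intro x hx
    rcases Finset.mem_image.mp hx with ⟨i, hi, he⟩
    simp only [pref, Finset.mem_filter] at hi
    rw [← he]
    exact mixFun_mem m π τ hi.2
  · rw [card_image_pref, Finset.card_image_of_injective _ (mix m π τ).injective]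

end MallowsAux


namespace Inv
open Finset

lemma orderIsoOfFin_congr {n : ℕ} {s t : Finset (Fin n)} (hst : s = t) {k : ℕ}
    (hs : s.card = k) (ht : t.card = k) (x : Fin k) :
    ((s.orderIsoOfFin hs x : Fin n)) = (t.orderIsoOfFin ht x : Fin n) := by
  subst hst; rfl

lemma orderIsoOfFin_symm_congr {n : ℕ} {s t : Finset (Fin n)} (hst : s = t) {k : ℕ}
    (hs : s.card = k) (ht : t.card = k) (v : Fin n) (hv : v ∈ s) (hv' : v ∈ t) :
    (s.orderIsoOfFin hs).symm ⟨v, hv⟩ = (t.orderIsoOfFin ht).symm ⟨v, hv'⟩ := by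
  subst hst; rfl

end Inv

namespace MallowsAux
open Finset Inv

lemma mix_mix {n : ℕ} (m : ℕ) (π τ : Equiv.Perm (Fin n)) :
    mix m (mix m π τ) (mix m τ π) = π := by
  ext i
  by_cases hi : (i : ℕ) < m
  · rw [mix_apply, mixFun, dif_pos hi]
    have himg : (pref n m).image ⇑(mix m π τ) = (pref n m).image ⇑τ := image_pref_mix m π τ
    have himg' : (pref n m).image ⇑(mix m τ π) = (pref n m).image ⇑π := image_pref_mix m τ π
    have hρi : mix m π τ i ∈ (pref n m).image ⇑τ := by
      rw [← himg]; exact mem_image_pref m (mix m π τ) hi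
    rw [orderIsoOfFin_symm_congr himg (card_image_pref m (mix m π τ))
      (card_image_pref m τ) _ (mem_image_pref m (mix m π τ) hi) hρi]
    have hval : (⟨mix m π τ i, hρi⟩ : {x // x ∈ (pref n m).image ⇑τ})
        = ((pref n m).image ⇑τ).orderIsoOfFin (card_image_pref m τ)
          ((((pref n m).image ⇑π).orderIsoOfFin (card_image_pref m π)).symm
            ⟨π i, mem_image_pref m π hi⟩) := by
      apply Subtype.ext
      show mixFun m π τ i = _
      exact dif_pos hi
    rw [hval, OrderIso.symm_apply_apply]
    rw [orderIsoOfFin_congr himg' (card_image_pref m (mix m τ π)) (card_image_pref m π)]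
    rw [OrderIso.apply_symm_apply]
  · rw [mix_apply, mixFun_suffix m _ _ hi, mix_apply, mixFun_suffix m _ _ hi]

lemma inversions_mix_add {n : ℕ} (m : ℕ) (π τ : Equiv.Perm (Fin n)) :
    inversions (mix m π τ) + inversions (mix m τ π) = inversions π + inversions τ := by
  have h1 : ∀ (π τ : Equiv.Perm (Fin n)),
      ∑ j ∈ Finset.univ.filter (fun j : Fin n => (j : ℕ) < m), cnt (mix m π τ) j
        = ∑ j ∈ Finset.univ.filter (fun j : Fin n => (j : ℕ) < m), cnt π j := by
    intro π τ
    exact prefix_sum_congr m _ _ (fun i i' hi hi' => mix_lt_iff m π τ hi hi')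
  have h2 : ∀ (π τ : Equiv.Perm (Fin n)),
      ∑ j ∈ Finset.univ.filter (fun j : Fin n => ¬ (j : ℕ) < m), cnt (mix m π τ) j
        = ∑ j ∈ Finset.univ.filter (fun j : Fin n => ¬ (j : ℕ) < m), cnt τ j := by
    intro π τ
    exact suffix_sum_congr m _ _ (fun j hj => mix_suffix m π τ hj)
  rw [inversions_split m (mix m π τ), inversions_split m (mix m τ π),
    inversions_split m π, inversions_split m τ, h1, h2, h1, h2]
  omega

end MallowsAux

namespace MallowsAux
open Finset

theorem comb {n : ℕ} (m : ℕ) (q : ℝ) (P1 P2 : Equiv.Perm (Fin n) → Prop)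
    [DecidablePred P1] [DecidablePred P2]
    (h1 : ∀ π ρ : Equiv.Perm (Fin n),
      (∀ i i' : Fin n, (i : ℕ) < m → (i' : ℕ) < m → (π i < π i' ↔ ρ i < ρ i')) →
      (P1 π ↔ P1 ρ))
    (h2 : ∀ π ρ : Equiv.Perm (Fin n),
      (∀ j : Fin n, m ≤ (j : ℕ) → π j = ρ j) → (P2 π ↔ P2 ρ)) :
    (∑ τ : Equiv.Perm (Fin n), q ^ inversions τ) *
      (∑ π ∈ Finset.univ.filter (fun π => P1 π ∧ P2 π), q ^ inversions π) =
    (∑ π ∈ Finset.univ.filter P1, q ^ inversions π) *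
      (∑ π ∈ Finset.univ.filter P2, q ^ inversions π) := by
  classical
  rw [Finset.sum_mul_sum, Finset.sum_mul_sum, ← Finset.sum_product', ← Finset.sum_product']
  -- hypotheses about mix and events
  have hP1mix : ∀ π τ : Equiv.Perm (Fin n), P1 π → P1 (mix m π τ) := by
    intro π τ h
    exact (h1 π (mix m π τ) (fun i i' hi hi' => (mix_lt_iff m π τ hi hi').symm)).mp h
  have hP2mix : ∀ π τ : Equiv.Perm (Fin n), P2 π → P2 (mix m τ π) := by
    intro π τ h
    exact (h2 π (mix m τ π) (fun j hj => (mix_suffix m τ π hj).symm)).mp h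
  refine Finset.sum_nbij' (fun p => (mix m p.2 p.1, mix m p.1 p.2))
    (fun p => (mix m p.2 p.1, mix m p.1 p.2)) ?_ ?_ ?_ ?_ ?_
  · rintro ⟨τ, π⟩ hp
    simp only [Finset.mem_product, Finset.mem_filter, Finset.mem_univ, true_and] at hp ⊢
    exact ⟨hP1mix π τ hp.1, hP2mix π τ hp.2⟩
  · rintro ⟨π', τ'⟩ hp
    simp only [Finset.mem_product, Finset.mem_filter, Finset.mem_univ, true_and] at hp ⊢
    exact ⟨hP1mix π' τ' hp.1, hP2mix τ' π' hp.2⟩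
  · rintro ⟨τ, π⟩ _
    simp only [Prod.mk.injEq]
    exact ⟨mix_mix m τ π, mix_mix m π τ⟩
  · rintro ⟨π', τ'⟩ _
    simp only [Prod.mk.injEq]
    exact ⟨mix_mix m π' τ', mix_mix m τ' π'⟩
  · rintro ⟨τ, π⟩ _
    show q ^ inversions τ * q ^ inversions π = q ^ inversions (mix m π τ) * q ^ inversions (mix m τ π)
    rw [← pow_add, ← pow_add, inversions_mix_add m π τ, Nat.add_comm]

end MallowsAux

namespace MallowsAux
open Finset

/-- conjugation by the order-reversal of `Fin n` -/
def rconj {n : ℕ} (π : Equiv.Perm (Fin n)) : Equiv.Perm (Fin n) :=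
  (Fin.revPerm.trans π).trans Fin.revPerm

lemma rconj_apply {n : ℕ} (π : Equiv.Perm (Fin n)) (i : Fin n) :
    rconj π i = (π i.rev).rev := rfl

lemma rconj_rconj {n : ℕ} (π : Equiv.Perm (Fin n)) : rconj (rconj π) = π := by
  ext i
  simp [rconj_apply, Fin.rev_rev]

lemma inversions_rconj {n : ℕ} (π : Equiv.Perm (Fin n)) :
    inversions (rconj π) = inversions π := by
  unfold inversions
  refine Finset.card_nbij' (fun p => (p.2.rev, p.1.rev)) (fun p => (p.2.rev, p.1.rev))
    ?_ ?_ ?_ ?_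
  · intro p hp; obtain ⟨i, j⟩ := p
    rw [Finset.mem_coe, Finset.mem_filter] at hp; rw [Finset.mem_coe, Finset.mem_filter]
    simp only [Finset.mem_coe, Finset.mem_filter, Finset.mem_univ, true_and, rconj_apply] at hp ⊢
    exact ⟨Fin.rev_lt_rev.mpr hp.1, Fin.rev_lt_rev.mp hp.2⟩
  · intro p hp; obtain ⟨i, j⟩ := p
    rw [Finset.mem_coe, Finset.mem_filter] at hp; rw [Finset.mem_coe, Finset.mem_filter]
    simp only [Finset.mem_coe, Finset.mem_filter, Finset.mem_univ, true_and, rconj_apply] at hp ⊢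
    simp only [Fin.rev_rev]
    exact ⟨Fin.rev_lt_rev.mpr hp.1, Fin.rev_lt_rev.mpr hp.2⟩
  · rintro ⟨i, j⟩ _; simp [Fin.rev_rev]
  · rintro ⟨i, j⟩ _; simp [Fin.rev_rev]

end MallowsAux

namespace MallowsAux
open Finset

lemma sum_rconj {n : ℕ} (q : ℝ) (P : Equiv.Perm (Fin n) → Prop) [DecidablePred P] :
    ∑ π ∈ Finset.univ.filter (fun π => P (rconj π)), q ^ inversions π
      = ∑ π ∈ Finset.univ.filter P, q ^ inversions π := by
  refine Finset.sum_nbij' rconj rconj ?_ ?_ ?_ ?_ ?_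
  · intro π hπ
    simp only [Finset.mem_filter, Finset.mem_univ, true_and] at hπ ⊢
    exact hπ
  · intro π hπ
    simp only [Finset.mem_filter, Finset.mem_univ, true_and, rconj_rconj] at hπ ⊢
    exact hπ
  · intro π _; exact rconj_rconj π
  · intro π _; exact rconj_rconj π
  · intro π _; rw [inversions_rconj]

theorem comb' {n : ℕ} (m : ℕ) (q : ℝ) (P1 P2 : Equiv.Perm (Fin n) → Prop)
    [DecidablePred P1] [DecidablePred P2]
    (h1 : ∀ π ρ : Equiv.Perm (Fin n),
      (∀ i : Fin n, (i : ℕ) < m → π i = ρ i) → (P1 π ↔ P1 ρ))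
    (h2 : ∀ π ρ : Equiv.Perm (Fin n),
      (∀ j j' : Fin n, m ≤ (j : ℕ) → m ≤ (j' : ℕ) → (π j < π j' ↔ ρ j < ρ j')) →
      (P2 π ↔ P2 ρ)) :
    (∑ τ : Equiv.Perm (Fin n), q ^ inversions τ) *
      (∑ π ∈ Finset.univ.filter (fun π => P1 π ∧ P2 π), q ^ inversions π) =
    (∑ π ∈ Finset.univ.filter P1, q ^ inversions π) *
      (∑ π ∈ Finset.univ.filter P2, q ^ inversions π) := by
  classical
  have key := comb (n := n) (n - m) q (fun π => P2 (rconj π)) (fun π => P1 (rconj π))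
    (by
      intro π ρ h
      refine h2 (rconj π) (rconj ρ) ?_
      intro j j' hj hj'
      have hjr : ((j.rev : Fin n) : ℕ) < n - m := by rw [Fin.val_rev]; omega
      have hjr' : ((j'.rev : Fin n) : ℕ) < n - m := by rw [Fin.val_rev]; omega
      simp only [rconj_apply, Fin.rev_lt_rev]
      exact h j'.rev j.rev hjr' hjr)
    (by
      intro π ρ h
      refine h1 (rconj π) (rconj ρ) ?_
      intro i hi
      have hir : n - m ≤ ((i.rev : Fin n) : ℕ) := by
        rw [Fin.val_rev]; omega
      simp only [rconj_apply]
      rw [h i.rev hir])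
  rw [sum_rconj q (fun π => P2 π ∧ P1 π), sum_rconj q P1, sum_rconj q P2] at key
  have hfil : Finset.univ.filter (fun π : Equiv.Perm (Fin n) => P2 π ∧ P1 π)
      = Finset.univ.filter (fun π => P1 π ∧ P2 π) := by
    apply Finset.filter_congr; intro π _; exact and_comm
  rw [hfil] at key
  rw [key, mul_comm]

end MallowsAux

namespace MallowsAux
open Finset MeasureTheory

lemma Z_pos {n : ℕ} {q : ℝ} (hq : 0 < q) :
    0 < ∑ τ : Equiv.Perm (Fin n), q ^ inversions τ :=
  Finset.sum_pos (fun τ _ => pow_pos hq _) Finset.univ_nonempty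

lemma mallowsProb_nonneg {n : ℕ} {q : ℝ} (hq : 0 < q) (σ : Equiv.Perm (Fin n)) :
    0 ≤ mallowsProb n q σ :=
  div_nonneg (le_of_lt (pow_pos hq _)) (le_of_lt (Z_pos hq))

lemma mallowsProb_sum {n : ℕ} {q : ℝ} (hq : 0 < q) :
    ∑ σ : Equiv.Perm (Fin n), mallowsProb n q σ = 1 := by
  unfold mallowsProb
  rw [← Finset.sum_div]
  exact div_self (ne_of_gt (Z_pos hq))

lemma measure_event {Ω : Type*} [MeasurableSpace Ω] (ℙ : Measure Ω) [IsProbabilityMeasure ℙ]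
    {n : ℕ} {q : ℝ} (hq : 0 < q) (X : Ω → Equiv.Perm (Fin n)) (hX : IsMallows ℙ q X)
    (C : Equiv.Perm (Fin n) → Prop) (A : Finset (Equiv.Perm (Fin n)))
    (hA : ∀ σ, σ ∈ A ↔ C σ) :
    ℙ {ω | C (X ω)} = ENNReal.ofReal (∑ σ ∈ A, mallowsProb n q σ) := by
  have hm : ∀ σ : Equiv.Perm (Fin n),
      ℙ {ω | X ω = σ} = ENNReal.ofReal (mallowsProb n q σ) := by
    intro σ
    rw [← hX σ, ENNReal.ofReal_toReal (measure_ne_top ℙ _)]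
  have htot : ∑ σ : Equiv.Perm (Fin n), ℙ {ω | X ω = σ} = 1 := by
    calc ∑ σ : Equiv.Perm (Fin n), ℙ {ω | X ω = σ}
        = ∑ σ : Equiv.Perm (Fin n), ENNReal.ofReal (mallowsProb n q σ) := by
          exact Finset.sum_congr rfl fun σ _ => hm σ
      _ = ENNReal.ofReal (∑ σ : Equiv.Perm (Fin n), mallowsProb n q σ) :=
          (ENNReal.ofReal_sum_of_nonneg fun σ _ => mallowsProb_nonneg hq σ).symm
      _ = 1 := by rw [mallowsProb_sum hq, ENNReal.ofReal_one]
  have hsplit : ∑ σ ∈ Finset.univ \ A, ℙ {ω | X ω = σ} + ∑ σ ∈ A, ℙ {ω | X ω = σ}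
      = 1 := by
    rw [Finset.sum_sdiff (Finset.subset_univ A)]; exact htot
  have hub : ℙ {ω | C (X ω)} ≤ ∑ σ ∈ A, ℙ {ω | X ω = σ} := by
    refine le_trans (measure_mono ?_) (measure_biUnion_finset_le A _)
    intro ω hω
    exact Set.mem_biUnion ((hA (X ω)).mpr hω) rfl
  have hub' : ℙ {ω | ¬ C (X ω)} ≤ ∑ σ ∈ Finset.univ \ A, ℙ {ω | X ω = σ} := by
    refine le_trans (measure_mono ?_) (measure_biUnion_finset_le _ _)
    intro ω hω
    refine Set.mem_biUnion (Finset.mem_sdiff.mpr ⟨Finset.mem_univ _, ?_⟩) rfl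
    intro hmem
    exact hω ((hA (X ω)).mp hmem)
  have hcover : (1 : ENNReal) ≤ ℙ {ω | C (X ω)} + ℙ {ω | ¬ C (X ω)} := by
    have : (Set.univ : Set Ω) = {ω | C (X ω)} ∪ {ω | ¬ C (X ω)} := by
      ext ω; by_cases h : C (X ω) <;> simp [h]
    calc (1 : ENNReal) = ℙ Set.univ := (measure_univ).symm
      _ = ℙ ({ω | C (X ω)} ∪ {ω | ¬ C (X ω)}) := by rw [← this]
      _ ≤ ℙ {ω | C (X ω)} + ℙ {ω | ¬ C (X ω)} := measure_union_le _ _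
  have hAne : ∑ σ ∈ Finset.univ \ A, ℙ {ω | X ω = σ} ≠ ⊤ :=
    ENNReal.sum_ne_top.mpr (fun σ _ => measure_ne_top ℙ _)
  have hlb : ∑ σ ∈ A, ℙ {ω | X ω = σ} ≤ ℙ {ω | C (X ω)} := by
    have h1 : ∑ σ ∈ A, ℙ {ω | X ω = σ} + ∑ σ ∈ Finset.univ \ A, ℙ {ω | X ω = σ}
        ≤ ℙ {ω | C (X ω)} + ∑ σ ∈ Finset.univ \ A, ℙ {ω | X ω = σ} := by
      calc ∑ σ ∈ A, ℙ {ω | X ω = σ} + ∑ σ ∈ Finset.univ \ A, ℙ {ω | X ω = σ}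
          = 1 := by rw [add_comm]; exact hsplit
        _ ≤ ℙ {ω | C (X ω)} + ℙ {ω | ¬ C (X ω)} := hcover
        _ ≤ ℙ {ω | C (X ω)} + ∑ σ ∈ Finset.univ \ A, ℙ {ω | X ω = σ} :=
            add_le_add le_rfl hub'
    exact (ENNReal.add_le_add_iff_right hAne).mp h1
  have heq : ℙ {ω | C (X ω)} = ∑ σ ∈ A, ℙ {ω | X ω = σ} := le_antisymm hub hlb
  rw [heq, ENNReal.ofReal_sum_of_nonneg (fun σ _ => mallowsProb_nonneg hq σ)]
  exact Finset.sum_congr rfl fun σ _ => hm σ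

end MallowsAux

/-- **Lemma 2.6.** Let `a` and `b` be increasing sequences of indices in `[n]` with every entry
of `a` smaller than every entry of `b` (i.e. `a_k < b_1`).  If `π ~ μ_{n,q}`, then `π_a` and
`π(b)` are independent, and `π(a)` and `π_b` are independent (independence is expressed by
elementwise factorization, which is equivalent on a finite state space). -/
theorem mallows_induced_indep
    {Ω : Type*} [MeasurableSpace Ω] (ℙ : Measure Ω) [IsProbabilityMeasure ℙ]
    {n k l : ℕ} (q : ℝ) (hq : 0 < q)
    (a : Fin k → Fin n) (b : Fin l → Fin n) (ha : StrictMono a) (hb : StrictMono b)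
    (hab : ∀ (i : Fin k) (j : Fin l), a i < b j)
    (X : Ω → Equiv.Perm (Fin n)) (hX : IsMallows ℙ q X) :
    (∀ (σ : Equiv.Perm (Fin k)) (v : Fin l → Fin n),
      ℙ {ω | inducedEqOn (X ω) a σ ∧ (fun j => X ω (b j)) = v} =
        ℙ {ω | inducedEqOn (X ω) a σ} * ℙ {ω | (fun j => X ω (b j)) = v}) ∧
    (∀ (u : Fin k → Fin n) (σ' : Equiv.Perm (Fin l)),
      ℙ {ω | (fun i => X ω (a i)) = u ∧ inducedEqOn (X ω) b σ'} =
        ℙ {ω | (fun i => X ω (a i)) = u} * ℙ {ω | inducedEqOn (X ω) b σ'}) := by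
  classical
  have hZ : 0 < ∑ τ : Equiv.Perm (Fin n), q ^ inversions τ := MallowsAux.Z_pos hq
  obtain ⟨m, ham, hbm⟩ : ∃ m : ℕ, (∀ i : Fin k, ((a i : Fin n) : ℕ) < m) ∧
      (∀ j : Fin l, m ≤ ((b j : Fin n) : ℕ)) := by
    by_cases hl : 0 < l
    · refine ⟨((b ⟨0, hl⟩ : Fin n) : ℕ), fun i => ?_, fun j => ?_⟩
      · exact Fin.lt_iff_val_lt_val.mp (hab i ⟨0, hl⟩)
      · exact Fin.le_iff_val_le_val.mp (hb.monotone (by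
          exact Fin.mk_le_of_le_val (Nat.zero_le _)))
    · exact ⟨n, fun i => (a i).isLt, fun j => absurd j.pos hl⟩
  -- a generic factorization principle for probabilities of events
  have main : ∀ (C1 C2 : Equiv.Perm (Fin n) → Prop),
      ((∑ τ : Equiv.Perm (Fin n), q ^ inversions τ) *
        (∑ π ∈ Finset.univ.filter (fun π => C1 π ∧ C2 π), q ^ inversions π) =
      (∑ π ∈ Finset.univ.filter C1, q ^ inversions π) *
        (∑ π ∈ Finset.univ.filter C2, q ^ inversions π)) →
      ℙ {ω | C1 (X ω) ∧ C2 (X ω)} = ℙ {ω | C1 (X ω)} * ℙ {ω | C2 (X ω)} := by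
    intro C1 C2 key
    have hreal : ∑ π ∈ Finset.univ.filter (fun π => C1 π ∧ C2 π), mallowsProb n q π
        = (∑ π ∈ Finset.univ.filter C1, mallowsProb n q π) *
          (∑ π ∈ Finset.univ.filter C2, mallowsProb n q π) := by
      unfold mallowsProb
      rw [← Finset.sum_div, ← Finset.sum_div, ← Finset.sum_div, div_mul_div_comm, ← key,
        mul_div_mul_left _ _ (ne_of_gt hZ)]
    have e12 : ℙ {ω | C1 (X ω) ∧ C2 (X ω)} =
        ENNReal.ofReal (∑ π ∈ Finset.univ.filter (fun π => C1 π ∧ C2 π), mallowsProb n q π) :=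
      MallowsAux.measure_event ℙ hq X hX (fun π => C1 π ∧ C2 π) _ (by simp)
    have e1 : ℙ {ω | C1 (X ω)} =
        ENNReal.ofReal (∑ π ∈ Finset.univ.filter C1, mallowsProb n q π) :=
      MallowsAux.measure_event ℙ hq X hX C1 _ (by simp)
    have e2 : ℙ {ω | C2 (X ω)} =
        ENNReal.ofReal (∑ π ∈ Finset.univ.filter C2, mallowsProb n q π) :=
      MallowsAux.measure_event ℙ hq X hX C2 _ (by simp)
    rw [e12, e1, e2, hreal, ENNReal.ofReal_mul
      (Finset.sum_nonneg fun π _ => MallowsAux.mallowsProb_nonneg hq π)]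
  constructor
  · intro σ v
    have key := @MallowsAux.comb n m q (fun π => inducedEqOn π a σ)
      (fun π => (fun j => π (b j)) = v)
      (fun _ => Classical.propDecidable _) (fun _ => Classical.propDecidable _)
      (by
        intro π ρ h
        unfold inducedEqOn
        refine forall_congr' fun i => ?_
        have : (Finset.univ.filter fun l' : Fin k => π (a l') < π (a i))
            = Finset.univ.filter fun l' : Fin k => ρ (a l') < ρ (a i) :=
          Finset.filter_congr fun l' _ => h (a l') (a i) (ham l') (ham i)
        rw [this])
      (by
        intro π ρ h
        have h2 : (fun j => π (b j)) = fun j => ρ (b j) :=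
          funext fun j => h (b j) (hbm j)
        show ((fun j => π (b j)) = v) ↔ ((fun j => ρ (b j)) = v)
        rw [h2])
    exact main _ _ key
  · intro u σ'
    have key := @MallowsAux.comb' n m q (fun π => (fun i => π (a i)) = u)
      (fun π => inducedEqOn π b σ')
      (fun _ => Classical.propDecidable _) (fun _ => Classical.propDecidable _)
      (by
        intro π ρ h
        have h2 : (fun i => π (a i)) = fun i => ρ (a i) :=
          funext fun i => h (a i) (ham i)
        show ((fun i => π (a i)) = u) ↔ ((fun i => ρ (a i)) = u)
        rw [h2])
      (by
        intro π ρ h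
        unfold inducedEqOn
        refine forall_congr' fun i => ?_
        have : (Finset.univ.filter fun l' : Fin l => π (b l') < π (b i))
            = Finset.univ.filter fun l' : Fin l => ρ (b l') < ρ (b i) :=
          Finset.filter_congr fun l' _ => h (b l') (b i) (hbm l') (hbm i)
        rw [this])
    exact main _ _ key
end

section
/- Let I = (i, i+1, …, i+m-1) ⊂ [n] be a sequence of m consecutive indices and let q > 0. If π ~ μ_{n,q}, then the induced permutation π_I is distributed according to μ_{m,q}, and the induced permutation π_{π^{-1}(I)} (where π^{-1}(I) is listed in increasing order) is distributed according to μ_{m,q}. Moreover, conditioned on the event π^{-1}(I) = E for any fixed set E ⊂ [n] of size m, the induced permutation π_E is still distributed according to μ_{m,q}. -/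
open MeasureTheory Filter

/-- `inducedEqFinset π E σ` says that `E` has cardinality `m` and that the permutation of
`S_m` induced by `π` on `E` (listed in increasing order) equals `σ`: for each `j ∈ E`, letting
`r = #{t ∈ E | t < j}` be the (0-based) position of `j` in `E`, the rank of `π j` among
`{π t | t ∈ E}` equals `σ r`. -/
def inducedEqFinset {n m : ℕ} (π : Equiv.Perm (Fin n)) (E : Finset (Fin n))
    (σ : Equiv.Perm (Fin m)) : Prop :=
  ∃ h : E.card = m, ∀ (j : Fin n) (hj : j ∈ E),
    (E.filter fun t => π t < π j).card =
      ((σ ⟨(E.filter fun t => t < j).card,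
          lt_of_lt_of_eq
            (Finset.card_lt_card (Finset.filter_ssubset.2 ⟨j, hj, lt_irrefl j⟩)) h⟩ : Fin m) : ℕ)

namespace MallowsAux
open Finset Equiv

variable {n m i₀ : ℕ}

lemma perm_inv_apply_self {α : Type*} (π : Equiv.Perm α) (x : α) : π⁻¹ (π x) = x :=
  π.symm_apply_apply x

lemma perm_apply_inv_self {α : Type*} (π : Equiv.Perm α) (x : α) : π (π⁻¹ x) = x :=
  π.apply_symm_apply x

/-- The set of positions whose value lies in the window `[i₀, i₀+m)`. -/
def Eset (i₀ m : ℕ) {n : ℕ} (π : Equiv.Perm (Fin n)) : Finset (Fin n) :=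
  Finset.univ.filter fun t => i₀ ≤ (π t : ℕ) ∧ (π t : ℕ) < i₀ + m

lemma card_filter_Ico (n a b : ℕ) (hb : b ≤ n) :
    (Finset.univ.filter fun v : Fin n => a ≤ (v : ℕ) ∧ (v : ℕ) < b).card = b - a := by
  rw [← Nat.card_Ico a b]
  apply Finset.card_bij (fun (v : Fin n) _ => (v : ℕ))
  · intro v hv; simp only [mem_filter] at hv; simp [Finset.mem_Ico, hv.2.1, hv.2.2]
  · intro v1 _ v2 _ h; exact Fin.ext h
  · intro k hk
    rw [Finset.mem_Ico] at hk
    exact ⟨⟨k, lt_of_lt_of_le hk.2 hb⟩, by simp [hk.1, hk.2], rfl⟩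

lemma card_Eset (hI : i₀ + m ≤ n) (π : Equiv.Perm (Fin n)) : (Eset i₀ m π).card = m := by
  have h2 : (Finset.univ.filter fun v : Fin n => i₀ ≤ (v : ℕ) ∧ (v : ℕ) < i₀ + m).card
      = i₀ + m - i₀ := card_filter_Ico n i₀ (i₀+m) hI
  rw [show i₀ + m - i₀ = m by omega] at h2
  conv_rhs => rw [← h2]
  exact Finset.card_bij (fun (t : Fin n) _ => π t)
    (by intro t ht; simp only [Eset, mem_filter] at ht ⊢; exact ⟨mem_univ _, ht.2⟩)
    (by intro t1 _ t2 _ h; exact π.injective h)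
    (by intro v hv; simp only [mem_filter] at hv
        exact ⟨π⁻¹ v, by simp [Eset, hv.2], by simp⟩)

lemma mem_Eset {π : Equiv.Perm (Fin n)} {j : Fin n} :
    j ∈ Eset i₀ m π ↔ i₀ ≤ (π j : ℕ) ∧ (π j : ℕ) < i₀ + m := by
  simp [Eset]

/-- rank of the value `π j` inside the window equals `π j - i₀`. -/
lemma card_filter_lt_val (hI : i₀ + m ≤ n) (π : Equiv.Perm (Fin n)) {E : Finset (Fin n)}
    (hE : Eset i₀ m π = E) {j : Fin n} (hj : j ∈ E) :
    (E.filter fun t => π t < π j).card = (π j : ℕ) - i₀ := by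
  subst hE
  have hjE := mem_Eset.1 hj
  have h2 : (Finset.univ.filter fun v : Fin n => i₀ ≤ (v : ℕ) ∧ (v : ℕ) < (π j : ℕ)).card
      = (π j : ℕ) - i₀ := card_filter_Ico n i₀ _ (le_of_lt (π j).isLt)
  rw [← h2]
  apply Finset.card_bij (fun (t : Fin n) _ => π t)
  · intro t ht
    simp only [mem_filter, mem_Eset, Fin.lt_def] at ht ⊢
    exact ⟨mem_univ _, ht.1.1, ht.2⟩
  · intro t1 _ t2 _ h; exact π.injective h
  · intro v hv
    simp only [mem_filter] at hv
    refine ⟨π⁻¹ v, ?_, by simp⟩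
    simp only [mem_filter, mem_Eset, Fin.lt_def]
    simp only [perm_apply_inv_self]
    exact ⟨⟨hv.2.1, lt_of_lt_of_le hv.2.2 (le_trans (Nat.le_of_lt_succ (Nat.lt_succ_of_lt hjE.2)) (le_refl _))⟩, hv.2.2⟩


lemma pos_lt {E : Finset (Fin n)} (hE : E.card = m)
    {j : Fin n} (hj : j ∈ E) : (E.filter fun t => t < j).card < m :=
  lt_of_lt_of_eq (Finset.card_lt_card (Finset.filter_ssubset.2 ⟨j, hj, lt_irrefl j⟩)) hE

/-- Characterization of `inducedEqFinset` by values, when `E` is exactly the window preimage. -/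
lemma inducedEqFinset_iff_vals (hI : i₀ + m ≤ n) {π : Equiv.Perm (Fin n)} {E : Finset (Fin n)}
    (hE : Eset i₀ m π = E) (σ : Equiv.Perm (Fin m)) :
    inducedEqFinset π E σ ↔ ∀ (j : Fin n) (hj : j ∈ E),
      (π j : ℕ) = i₀ + (σ ⟨(E.filter fun t => t < j).card,
          pos_lt (hE ▸ card_Eset hI π) hj⟩ : Fin m) := by
  have hcard : E.card = m := hE ▸ card_Eset hI π
  constructor
  · rintro ⟨h, hv⟩ j hj
    have h1 := hv j hj
    rw [card_filter_lt_val hI π hE hj] at h1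
    have h2 : i₀ ≤ (π j : ℕ) := ((mem_Eset).1 (hE ▸ hj)).1
    omega
  · intro h
    refine ⟨hcard, fun j hj => ?_⟩
    rw [card_filter_lt_val hI π hE hj, h j hj]
    omega

/-- rank of the `s`-th element of `E`. -/
lemma card_filter_lt_orderIso {E : Finset (Fin n)} (h : E.card = m) (s : Fin m) :
    (E.filter fun t => t < (E.orderIsoOfFin h s : Fin n)).card = (s : ℕ) := by
  have : ((Finset.univ : Finset (Fin m)).filter fun l => l < s).card = (s : ℕ) := by
    have : (Finset.univ.filter fun l : Fin m => l < s) = Finset.Iio s := by ext; simp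
    rw [this]; simp
  rw [← this]
  symm
  apply Finset.card_bij (fun (l : Fin m) _ => (E.orderIsoOfFin h l : Fin n))
  · intro l hl
    simp only [mem_filter, mem_univ, true_and] at hl ⊢
    exact ⟨(E.orderIsoOfFin h l).2, by exact_mod_cast (E.orderIsoOfFin h).lt_iff_lt.2 hl⟩
  · intro l1 _ l2 _ hl
    have := (E.orderIsoOfFin h).injective (Subtype.ext hl)
    exact this
  · intro t ht
    simp only [mem_filter] at ht
    refine ⟨(E.orderIsoOfFin h).symm ⟨t, ht.1⟩, ?_, by simp⟩
    simp only [mem_filter, mem_univ, true_and]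
    refine (E.orderIsoOfFin h).lt_iff_lt.1 ?_
    rw [OrderIso.apply_symm_apply]
    exact Subtype.coe_lt_coe.1 ht.2

/-- the value formula at the `s`-th element of `E`. -/
lemma val_at (hI : i₀ + m ≤ n) {π : Equiv.Perm (Fin n)} {E : Finset (Fin n)}
    (hE : Eset i₀ m π = E) {σ : Equiv.Perm (Fin m)} (hσ : inducedEqFinset π E σ)
    (h : E.card = m) (s : Fin m) :
    (π (E.orderIsoOfFin h s : Fin n) : ℕ) = i₀ + (σ s : ℕ) := by
  have hmem : ((E.orderIsoOfFin h s : Fin n)) ∈ E := (E.orderIsoOfFin h s).2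
  have h2 := (inducedEqFinset_iff_vals hI hE σ).1 hσ _ hmem
  rw [h2, show (⟨(E.filter fun t => t < ((E.orderIsoOfFin h) s : Fin n)).card,
      pos_lt h hmem⟩ : Fin m) = s from Fin.ext (card_filter_lt_orderIso h s)]

/-- Existence of the induced permutation. -/
lemma exists_induced (hI : i₀ + m ≤ n) (π : Equiv.Perm (Fin n)) {E : Finset (Fin n)}
    (hE : Eset i₀ m π = E) : ∃ σ : Equiv.Perm (Fin m), inducedEqFinset π E σ := by
  classical
  have h : E.card = m := hE ▸ card_Eset hI π
  set e := E.orderIsoOfFin h with he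
  have hmemE : ∀ s : Fin m, ((e s : Fin n)) ∈ E := fun s => (e s).2
  have hwin : ∀ j ∈ E, i₀ ≤ (π j : ℕ) ∧ (π j : ℕ) < i₀ + m := by
    intro j hj; rw [← hE] at hj; exact mem_Eset.1 hj
  have hbnd : ∀ s : Fin m, (π (e s : Fin n) : ℕ) - i₀ < m := by
    intro s
    have := hwin _ (hmemE s)
    omega
  set g : Fin m → Fin m := fun s => ⟨(π (e s : Fin n) : ℕ) - i₀, hbnd s⟩ with hg
  have hginj : Function.Injective g := by
    intro s t hst
    have h1 := hwin _ (hmemE s)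
    have h2 := hwin _ (hmemE t)
    have : (π (e s : Fin n) : ℕ) = (π (e t : Fin n) : ℕ) := by
      have := congrArg Fin.val hst
      simp only [hg] at this
      omega
    have := π.injective (Fin.ext this)
    exact e.injective (Subtype.ext this)
  have hgbij : Function.Bijective g := Finite.injective_iff_bijective.1 hginj
  refine ⟨Equiv.ofBijective g hgbij, ?_⟩
  rw [inducedEqFinset_iff_vals hI hE]
  intro j hj
  set s := e.symm ⟨j, hj⟩ with hs
  have hes : (e s : Fin n) = j := by simp [hs]
  have hpos : (⟨(E.filter fun t => t < j).card, pos_lt (hE ▸ card_Eset hI π) hj⟩ : Fin m) = s := by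
    apply Fin.ext
    simp only
    rw [← hes]
    exact card_filter_lt_orderIso h s
  rw [hpos]
  have : (Equiv.ofBijective g hgbij s : ℕ) = (π (e s : Fin n) : ℕ) - i₀ := rfl
  rw [this, hes]
  have := hwin _ hj
  omega

/-- Uniqueness of the induced permutation. -/
lemma induced_unique (hI : i₀ + m ≤ n) {π : Equiv.Perm (Fin n)} {E : Finset (Fin n)}
    (hE : Eset i₀ m π = E) {σ τ : Equiv.Perm (Fin m)}
    (h1 : inducedEqFinset π E σ) (h2 : inducedEqFinset π E τ) : σ = τ := by
  have h : E.card = m := hE ▸ card_Eset hI π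
  apply Equiv.ext
  intro s
  have e1 := val_at hI hE h1 h s
  have e2 := val_at hI hE h2 h s
  apply Fin.ext
  omega


/-- The block permutation acting on values inside the window by `ρ`. -/
def blockFun (hI : i₀ + m ≤ n) (ρ : Equiv.Perm (Fin m)) (v : Fin n) : Fin n :=
  if h : i₀ ≤ (v : ℕ) ∧ (v : ℕ) < i₀ + m then
    ⟨i₀ + (ρ ⟨(v : ℕ) - i₀, by omega⟩ : Fin m),
      Nat.lt_of_lt_of_le (Nat.add_lt_add_left (Fin.is_lt _) i₀) hI⟩
  else v

lemma blockFun_of_mem (hI : i₀ + m ≤ n) (ρ : Equiv.Perm (Fin m)) {v : Fin n}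
    (h : i₀ ≤ (v : ℕ) ∧ (v : ℕ) < i₀ + m) :
    (blockFun hI ρ v : ℕ) = i₀ + (ρ ⟨(v : ℕ) - i₀, by omega⟩ : Fin m) := by
  rw [blockFun, dif_pos h]

lemma blockFun_of_not_mem (hI : i₀ + m ≤ n) (ρ : Equiv.Perm (Fin m)) {v : Fin n}
    (h : ¬(i₀ ≤ (v : ℕ) ∧ (v : ℕ) < i₀ + m)) : blockFun hI ρ v = v := by
  rw [blockFun, dif_neg h]

lemma blockFun_mem_iff (hI : i₀ + m ≤ n) (ρ : Equiv.Perm (Fin m)) (v : Fin n) :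
    (i₀ ≤ (blockFun hI ρ v : ℕ) ∧ (blockFun hI ρ v : ℕ) < i₀ + m) ↔
      (i₀ ≤ (v : ℕ) ∧ (v : ℕ) < i₀ + m) := by
  by_cases h : i₀ ≤ (v : ℕ) ∧ (v : ℕ) < i₀ + m
  · rw [blockFun_of_mem hI ρ h]
    have := (ρ ⟨(v : ℕ) - i₀, by omega⟩).is_lt
    constructor
    · intro _; exact h
    · intro _; omega
  · rw [blockFun_of_not_mem hI ρ h]

lemma blockFun_leftInv (hI : i₀ + m ≤ n) (ρ : Equiv.Perm (Fin m)) (v : Fin n) :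
    blockFun hI ρ⁻¹ (blockFun hI ρ v) = v := by
  by_cases h : i₀ ≤ (v : ℕ) ∧ (v : ℕ) < i₀ + m
  · have h1 : (blockFun hI ρ v : ℕ) = i₀ + (ρ ⟨(v : ℕ) - i₀, by omega⟩ : Fin m) :=
      blockFun_of_mem hI ρ h
    have hb := (ρ ⟨(v : ℕ) - i₀, by omega⟩).is_lt
    have h2 : i₀ ≤ (blockFun hI ρ v : ℕ) ∧ (blockFun hI ρ v : ℕ) < i₀ + m := by omega
    apply Fin.ext
    rw [blockFun_of_mem hI ρ⁻¹ h2]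
    have h3 : (⟨(blockFun hI ρ v : ℕ) - i₀, by omega⟩ : Fin m) = ρ ⟨(v : ℕ) - i₀, by omega⟩ :=
      Fin.ext (show (blockFun hI ρ v : ℕ) - i₀ = _ from Nat.sub_eq_of_eq_add (h1.trans (Nat.add_comm _ _)))
    rw [h3, perm_inv_apply_self]
    simp only
    omega
  · rw [blockFun_of_not_mem hI ρ h, blockFun_of_not_mem hI ρ⁻¹ h]

/-- The block permutation as an element of the symmetric group. -/
def blockPerm (hI : i₀ + m ≤ n) (ρ : Equiv.Perm (Fin m)) : Equiv.Perm (Fin n) where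
  toFun := blockFun hI ρ
  invFun := blockFun hI ρ⁻¹
  left_inv := blockFun_leftInv hI ρ
  right_inv := fun v => by have := blockFun_leftInv hI ρ⁻¹ v; rwa [inv_inv] at this

lemma blockPerm_apply (hI : i₀ + m ≤ n) (ρ : Equiv.Perm (Fin m)) (v : Fin n) :
    blockPerm hI ρ v = blockFun hI ρ v := rfl

lemma blockPerm_one (hI : i₀ + m ≤ n) : blockPerm hI (1 : Equiv.Perm (Fin m)) = 1 := by
  apply Equiv.ext
  intro v
  rw [blockPerm_apply]
  by_cases h : i₀ ≤ (v : ℕ) ∧ (v : ℕ) < i₀ + m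
  · apply Fin.ext
    rw [blockFun_of_mem hI 1 h]
    simp only [Equiv.Perm.one_apply]
    omega
  · rw [blockFun_of_not_mem hI 1 h]; rfl

lemma blockPerm_mul (hI : i₀ + m ≤ n) (ρ ρ' : Equiv.Perm (Fin m)) :
    blockPerm hI (ρ * ρ') = blockPerm hI ρ * blockPerm hI ρ' := by
  apply Equiv.ext
  intro v
  rw [Equiv.Perm.mul_apply, blockPerm_apply, blockPerm_apply, blockPerm_apply]
  by_cases h : i₀ ≤ (v : ℕ) ∧ (v : ℕ) < i₀ + m
  · have h1 : (blockFun hI ρ' v : ℕ) = i₀ + (ρ' ⟨(v : ℕ) - i₀, by omega⟩ : Fin m) :=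
      blockFun_of_mem hI ρ' h
    have hb := (ρ' ⟨(v : ℕ) - i₀, by omega⟩).is_lt
    have h2 : i₀ ≤ (blockFun hI ρ' v : ℕ) ∧ (blockFun hI ρ' v : ℕ) < i₀ + m := by omega
    apply Fin.ext
    rw [blockFun_of_mem hI (ρ * ρ') h, blockFun_of_mem hI ρ h2]
    have h3 : (⟨(blockFun hI ρ' v : ℕ) - i₀, by omega⟩ : Fin m) = ρ' ⟨(v : ℕ) - i₀, by omega⟩ :=
      Fin.ext (show (blockFun hI ρ' v : ℕ) - i₀ = _ from Nat.sub_eq_of_eq_add (h1.trans (Nat.add_comm _ _)))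
    rw [h3]
    rfl
  · rw [blockFun_of_not_mem hI ρ' h, blockFun_of_not_mem hI (ρ * ρ') h,
      blockFun_of_not_mem hI ρ h]

lemma blockFun_lt_iff (hI : i₀ + m ≤ n) (ρ : Equiv.Perm (Fin m)) {u w : Fin n}
    (h : ¬((i₀ ≤ (u : ℕ) ∧ (u : ℕ) < i₀ + m) ∧ (i₀ ≤ (w : ℕ) ∧ (w : ℕ) < i₀ + m))) :
    (blockFun hI ρ u < blockFun hI ρ w) ↔ u < w := by
  rw [Fin.lt_def, Fin.lt_def]
  by_cases hu : i₀ ≤ (u : ℕ) ∧ (u : ℕ) < i₀ + m <;>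
    by_cases hw : i₀ ≤ (w : ℕ) ∧ (w : ℕ) < i₀ + m
  · exact absurd ⟨hu, hw⟩ h
  · rw [blockFun_of_mem hI ρ hu, blockFun_of_not_mem hI ρ hw]
    have := (ρ ⟨(u : ℕ) - i₀, by omega⟩).is_lt
    omega
  · rw [blockFun_of_not_mem hI ρ hu, blockFun_of_mem hI ρ hw]
    have := (ρ ⟨(w : ℕ) - i₀, by omega⟩).is_lt
    omega
  · rw [blockFun_of_not_mem hI ρ hu, blockFun_of_not_mem hI ρ hw]


/-- internal inversions: both values in the window. -/
def invInt (i₀ m : ℕ) {n : ℕ} (π : Equiv.Perm (Fin n)) : ℕ :=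
  (Finset.univ.filter fun p : Fin n × Fin n =>
    (p.1 < p.2 ∧ π p.2 < π p.1) ∧
      ((i₀ ≤ (π p.1 : ℕ) ∧ (π p.1 : ℕ) < i₀ + m) ∧
        (i₀ ≤ (π p.2 : ℕ) ∧ (π p.2 : ℕ) < i₀ + m))).card

/-- external inversions: not both values in the window. -/
def invExt (i₀ m : ℕ) {n : ℕ} (π : Equiv.Perm (Fin n)) : ℕ :=
  (Finset.univ.filter fun p : Fin n × Fin n =>
    (p.1 < p.2 ∧ π p.2 < π p.1) ∧
      ¬((i₀ ≤ (π p.1 : ℕ) ∧ (π p.1 : ℕ) < i₀ + m) ∧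
        (i₀ ≤ (π p.2 : ℕ) ∧ (π p.2 : ℕ) < i₀ + m))).card

lemma inversions_eq_int_add_ext (π : Equiv.Perm (Fin n)) :
    inversions π = invInt i₀ m π + invExt i₀ m π := by
  classical
  rw [invInt, invExt, inversions]
  have e1 : (Finset.univ.filter fun p : Fin n × Fin n =>
      (p.1 < p.2 ∧ π p.2 < π p.1) ∧
        ((i₀ ≤ (π p.1 : ℕ) ∧ (π p.1 : ℕ) < i₀ + m) ∧
          (i₀ ≤ (π p.2 : ℕ) ∧ (π p.2 : ℕ) < i₀ + m)))
      = (Finset.univ.filter fun p : Fin n × Fin n => p.1 < p.2 ∧ π p.2 < π p.1).filter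
          (fun p => (i₀ ≤ (π p.1 : ℕ) ∧ (π p.1 : ℕ) < i₀ + m) ∧
            (i₀ ≤ (π p.2 : ℕ) ∧ (π p.2 : ℕ) < i₀ + m)) :=
    (Finset.filter_filter _ _ _).symm
  have e2 : (Finset.univ.filter fun p : Fin n × Fin n =>
      (p.1 < p.2 ∧ π p.2 < π p.1) ∧
        ¬((i₀ ≤ (π p.1 : ℕ) ∧ (π p.1 : ℕ) < i₀ + m) ∧
          (i₀ ≤ (π p.2 : ℕ) ∧ (π p.2 : ℕ) < i₀ + m)))
      = (Finset.univ.filter fun p : Fin n × Fin n => p.1 < p.2 ∧ π p.2 < π p.1).filter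
          (fun p => ¬((i₀ ≤ (π p.1 : ℕ) ∧ (π p.1 : ℕ) < i₀ + m) ∧
            (i₀ ≤ (π p.2 : ℕ) ∧ (π p.2 : ℕ) < i₀ + m))) :=
    (Finset.filter_filter _ _ _).symm
  rw [e1, e2]
  exact (Finset.card_filter_add_card_filter_not
    (fun p : Fin n × Fin n => (i₀ ≤ (π p.1 : ℕ) ∧ (π p.1 : ℕ) < i₀ + m) ∧
      (i₀ ≤ (π p.2 : ℕ) ∧ (π p.2 : ℕ) < i₀ + m))).symm

lemma invExt_block (hI : i₀ + m ≤ n) (ρ : Equiv.Perm (Fin m)) (π : Equiv.Perm (Fin n)) :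
    invExt i₀ m (blockPerm hI ρ * π) = invExt i₀ m π := by
  rw [invExt, invExt]
  congr 1
  apply Finset.filter_congr
  intro p _
  simp only [Equiv.Perm.mul_apply, blockPerm_apply]
  constructor
  · rintro ⟨⟨h1, h2⟩, h3⟩
    have m1 := blockFun_mem_iff hI ρ (π p.1)
    have m2 := blockFun_mem_iff hI ρ (π p.2)
    have h3' : ¬((i₀ ≤ (π p.1 : ℕ) ∧ (π p.1 : ℕ) < i₀ + m) ∧
        (i₀ ≤ (π p.2 : ℕ) ∧ (π p.2 : ℕ) < i₀ + m)) := by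
      rw [← m1, ← m2]; exact h3
    refine ⟨⟨h1, ?_⟩, h3'⟩
    rw [← blockFun_lt_iff hI ρ (fun hc => h3' ⟨hc.2, hc.1⟩)]
    exact h2
  · rintro ⟨⟨h1, h2⟩, h3⟩
    have m1 := blockFun_mem_iff hI ρ (π p.1)
    have m2 := blockFun_mem_iff hI ρ (π p.2)
    refine ⟨⟨h1, ?_⟩, by rw [m1, m2]; exact h3⟩
    rw [blockFun_lt_iff hI ρ (fun hc => h3 ⟨hc.2, hc.1⟩)]
    exact h2

lemma invInt_eq_inversions (hI : i₀ + m ≤ n) {π : Equiv.Perm (Fin n)} {E : Finset (Fin n)}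
    (hE : Eset i₀ m π = E) {σ : Equiv.Perm (Fin m)} (hσ : inducedEqFinset π E σ) :
    invInt i₀ m π = inversions σ := by
  have h : E.card = m := hE ▸ card_Eset hI π
  set e := E.orderIsoOfFin h with he
  have hval : ∀ s : Fin m, (π (e s : Fin n) : ℕ) = i₀ + (σ s : ℕ) := val_at hI hE hσ h
  rw [invInt, inversions]
  symm
  apply Finset.card_bij (fun (p : Fin m × Fin m) _ => ((e p.1 : Fin n), (e p.2 : Fin n)))
  · intro p hp
    simp only [mem_filter, mem_univ, true_and] at hp ⊢
    obtain ⟨h1, h2⟩ := hp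
    have w : ∀ s : Fin m, i₀ ≤ (π (e s : Fin n) : ℕ) ∧ (π (e s : Fin n) : ℕ) < i₀ + m := by
      intro s
      have := hval s
      have := (σ s).is_lt
      omega
    refine ⟨⟨?_, ?_⟩, w p.1, w p.2⟩
    · exact Subtype.coe_lt_coe.2 (e.lt_iff_lt.2 h1)
    · rw [Fin.lt_def, hval p.1, hval p.2]
      exact Nat.add_lt_add_left h2 i₀
  · intro p1 _ p2 _ hp
    have a1 : e p1.1 = e p2.1 := Subtype.ext (congrArg Prod.fst hp)
    have a2 : e p1.2 = e p2.2 := Subtype.ext (congrArg Prod.snd hp)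
    exact Prod.ext (e.injective a1) (e.injective a2)
  · rintro ⟨u, w⟩ hw
    simp only [mem_filter, mem_univ, true_and] at hw
    obtain ⟨⟨h1, h2⟩, hm1, hm2⟩ := hw
    have mu : u ∈ E := by rw [← hE]; exact mem_Eset.2 hm1
    have mw : w ∈ E := by rw [← hE]; exact mem_Eset.2 hm2
    refine ⟨(e.symm ⟨u, mu⟩, e.symm ⟨w, mw⟩), ?_, ?_⟩
    · simp only [mem_filter, mem_univ, true_and]
      constructor
      · apply e.lt_iff_lt.1
        rw [OrderIso.apply_symm_apply, OrderIso.apply_symm_apply]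
        exact Subtype.coe_lt_coe.1 h1
      · have v1 := hval (e.symm ⟨u, mu⟩)
        have v2 := hval (e.symm ⟨w, mw⟩)
        rw [OrderIso.apply_symm_apply] at v1 v2
        simp only at v1 v2
        rw [Fin.lt_def]
        rw [Fin.lt_def] at h2
        omega
    · simp

/-- block action on fibers. -/
lemma block_fiber (hI : i₀ + m ≤ n) {π : Equiv.Perm (Fin n)} {E : Finset (Fin n)}
    (hE : Eset i₀ m π = E) {σ : Equiv.Perm (Fin m)} (hσ : inducedEqFinset π E σ)
    (ρ : Equiv.Perm (Fin m)) :
    Eset i₀ m (blockPerm hI ρ * π) = E ∧ inducedEqFinset (blockPerm hI ρ * π) E (ρ * σ) := by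
  have hE' : Eset i₀ m (blockPerm hI ρ * π) = E := by
    rw [← hE]
    ext t
    rw [mem_Eset, mem_Eset, Equiv.Perm.mul_apply, blockPerm_apply]
    exact blockFun_mem_iff hI ρ (π t)
  refine ⟨hE', ?_⟩
  rw [inducedEqFinset_iff_vals hI hE' (ρ * σ)]
  intro j hj
  have hwin : i₀ ≤ (π j : ℕ) ∧ (π j : ℕ) < i₀ + m := by
    rw [← hE] at hj; exact mem_Eset.1 hj
  have hv := (inducedEqFinset_iff_vals hI hE σ).1 hσ j hj
  rw [Equiv.Perm.mul_apply, blockPerm_apply, blockFun_of_mem hI ρ hwin]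
  have h3 : (⟨(π j : ℕ) - i₀, by omega⟩ : Fin m)
      = σ ⟨(E.filter fun t => t < j).card, pos_lt (hE ▸ card_Eset hI π) hj⟩ :=
    Fin.ext (Nat.sub_eq_of_eq_add (hv.trans (Nat.add_comm _ _)))
  rw [h3]
  rfl

lemma inversions_one {k : ℕ} : inversions (1 : Equiv.Perm (Fin k)) = 0 := by
  rw [inversions]
  rw [Finset.card_eq_zero]
  apply Finset.filter_false_of_mem
  intro p _
  simp only [Equiv.Perm.one_apply]
  rintro ⟨h1, h2⟩
  exact absurd h1 (lt_asymm h2)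

lemma inversions_inv {k : ℕ} (π : Equiv.Perm (Fin k)) : inversions π⁻¹ = inversions π := by
  rw [inversions, inversions]
  apply Finset.card_bij (fun (p : Fin k × Fin k) _ => (π⁻¹ p.2, π⁻¹ p.1))
  · intro p hp
    simp only [mem_filter, mem_univ, true_and, perm_apply_inv_self] at hp ⊢
    exact ⟨hp.2, hp.1⟩
  · intro p1 h1 p2 h2 hp
    have a1 : π⁻¹ p1.2 = π⁻¹ p2.2 := congrArg Prod.fst hp
    have a2 : π⁻¹ p1.1 = π⁻¹ p2.1 := congrArg Prod.snd hp
    exact Prod.ext (π⁻¹.injective a2) (π⁻¹.injective a1)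
  · rintro ⟨u, w⟩ hw
    simp only [mem_filter, mem_univ, true_and] at hw
    refine ⟨(π w, π u), ?_, ?_⟩
    · simp only [mem_filter, mem_univ, true_and, perm_inv_apply_self]
      exact ⟨hw.2, hw.1⟩
    · simp


lemma inversions_block (hI : i₀ + m ≤ n) {π : Equiv.Perm (Fin n)} {E : Finset (Fin n)}
    (hE : Eset i₀ m π = E) {σ : Equiv.Perm (Fin m)} (hσ : inducedEqFinset π E σ)
    (ρ : Equiv.Perm (Fin m)) :
    inversions (blockPerm hI ρ * π) = invExt i₀ m π + inversions (ρ * σ) := by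
  obtain ⟨hE', hσ'⟩ := block_fiber hI hE hσ ρ
  rw [inversions_eq_int_add_ext (i₀ := i₀) (m := m),
    invInt_eq_inversions hI hE' hσ', invExt_block hI ρ π, Nat.add_comm]

lemma inversions_decomp (hI : i₀ + m ≤ n) {π : Equiv.Perm (Fin n)} {E : Finset (Fin n)}
    (hE : Eset i₀ m π = E) {σ : Equiv.Perm (Fin m)} (hσ : inducedEqFinset π E σ) :
    inversions π = invExt i₀ m π + inversions σ := by
  rw [inversions_eq_int_add_ext (i₀ := i₀) (m := m), invInt_eq_inversions hI hE hσ,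
    Nat.add_comm]

open scoped Classical in
/-- the fiber of permutations with window preimage `E` and induced permutation `σ`. -/
noncomputable def fib (hI : i₀ + m ≤ n) (E : Finset (Fin n)) (σ : Equiv.Perm (Fin m)) :
    Finset (Equiv.Perm (Fin n)) :=
  Finset.univ.filter fun π => inducedEqFinset π E σ ∧ Eset i₀ m π = E

lemma mem_fib {hI : i₀ + m ≤ n} {E : Finset (Fin n)} {σ : Equiv.Perm (Fin m)}
    {π : Equiv.Perm (Fin n)} :
    π ∈ fib hI E σ ↔ inducedEqFinset π E σ ∧ Eset i₀ m π = E := by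
  simp [fib]

variable {q : ℝ}

lemma sum_fib (hI : i₀ + m ≤ n) (hq : 0 < q) (E : Finset (Fin n)) (σ : Equiv.Perm (Fin m)) :
    ∑ π ∈ fib hI E σ, q ^ inversions π
      = q ^ inversions σ * ∑ π ∈ fib hI E 1, q ^ inversions π := by
  rw [Finset.mul_sum]
  apply Finset.sum_nbij' (i := fun π => blockPerm hI σ⁻¹ * π) (j := fun π => blockPerm hI σ * π)
  · intro π hπ
    rw [mem_fib] at hπ ⊢
    obtain ⟨h1, h2⟩ := hπ
    obtain ⟨h3, h4⟩ := block_fiber hI h2 h1 σ⁻¹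
    rw [inv_mul_cancel] at h4
    exact ⟨h4, h3⟩
  · intro π hπ
    rw [mem_fib] at hπ ⊢
    obtain ⟨h1, h2⟩ := hπ
    obtain ⟨h3, h4⟩ := block_fiber hI h2 h1 σ
    rw [mul_one] at h4
    exact ⟨h4, h3⟩
  · intro π _
    rw [← mul_assoc, ← blockPerm_mul, mul_inv_cancel, blockPerm_one, one_mul]
  · intro π _
    rw [← mul_assoc, ← blockPerm_mul, inv_mul_cancel, blockPerm_one, one_mul]
  · intro π hπ
    rw [mem_fib] at hπ
    obtain ⟨h1, h2⟩ := hπ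
    have d1 : inversions π = invExt i₀ m π + inversions σ := inversions_decomp hI h2 h1
    have d2 : inversions (blockPerm hI σ⁻¹ * π) = invExt i₀ m π + inversions (σ⁻¹ * σ) :=
      inversions_block hI h2 h1 σ⁻¹
    rw [inv_mul_cancel, inversions_one, Nat.add_zero] at d2
    rw [d1, d2, pow_add, mul_comm]

open scoped Classical in
lemma sum_Eset_fiber (hI : i₀ + m ≤ n) (hq : 0 < q) (E : Finset (Fin n)) :
    ∑ π ∈ Finset.univ.filter (fun π : Equiv.Perm (Fin n) => Eset i₀ m π = E),
        q ^ inversions π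
      = (∑ τ : Equiv.Perm (Fin m), q ^ inversions τ) *
          ∑ π ∈ fib hI E 1, q ^ inversions π := by
  rw [Finset.sum_mul]
  have step : ∀ τ : Equiv.Perm (Fin m),
      q ^ inversions τ * ∑ π ∈ fib hI E 1, q ^ inversions π
        = ∑ π ∈ fib hI E τ, q ^ inversions π := fun τ => (sum_fib hI hq E τ).symm
  calc ∑ π ∈ Finset.univ.filter (fun π : Equiv.Perm (Fin n) => Eset i₀ m π = E),
        q ^ inversions π
      = ∑ π ∈ Finset.univ.filter (fun π : Equiv.Perm (Fin n) => Eset i₀ m π = E),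
          ∑ τ : Equiv.Perm (Fin m), (if inducedEqFinset π E τ then q ^ inversions π else 0) := by
        apply Finset.sum_congr rfl
        intro π hπ
        rw [Finset.mem_filter] at hπ
        obtain ⟨σ₀, hσ₀⟩ := exists_induced hI π hπ.2
        rw [Finset.sum_eq_single σ₀]
        · rw [if_pos hσ₀]
        · intro τ _ hτ
          rw [if_neg]
          intro hc
          exact hτ (induced_unique hI hπ.2 hc hσ₀)
        · intro hc
          exact absurd (Finset.mem_univ σ₀) hc
    _ = ∑ τ : Equiv.Perm (Fin m),
          ∑ π ∈ Finset.univ.filter (fun π : Equiv.Perm (Fin n) => Eset i₀ m π = E),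
            (if inducedEqFinset π E τ then q ^ inversions π else 0) := Finset.sum_comm
    _ = ∑ τ : Equiv.Perm (Fin m), ∑ π ∈ fib hI E τ, q ^ inversions π := by
        apply Finset.sum_congr rfl
        intro τ _
        rw [← Finset.sum_filter, fib]
        congr 1
        rw [Finset.filter_filter]
        apply Finset.filter_congr
        intro π _
        simp only [and_comm]
    _ = ∑ τ : Equiv.Perm (Fin m), q ^ inversions τ * ∑ π ∈ fib hI E 1, q ^ inversions π := by
        apply Finset.sum_congr rfl
        intro τ _
        exact (step τ).symm


open scoped Classical in
lemma sum_univ_decomp (hI : i₀ + m ≤ n) (hq : 0 < q) :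
    ∑ π : Equiv.Perm (Fin n), q ^ inversions π
      = (∑ τ : Equiv.Perm (Fin m), q ^ inversions τ) *
          ∑ E : Finset (Fin n), ∑ π ∈ fib hI E 1, q ^ inversions π := by
  rw [Finset.mul_sum]
  rw [← Finset.sum_fiberwise Finset.univ (fun π : Equiv.Perm (Fin n) => Eset i₀ m π)
    (fun π => q ^ inversions π)]
  apply Finset.sum_congr rfl
  intro E _
  exact sum_Eset_fiber hI hq E

open scoped Classical in
lemma sum_stmt2 (hI : i₀ + m ≤ n) (hq : 0 < q) (σ : Equiv.Perm (Fin m)) :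
    ∑ π ∈ Finset.univ.filter
        (fun π : Equiv.Perm (Fin n) => inducedEqFinset π (Eset i₀ m π) σ),
        q ^ inversions π
      = q ^ inversions σ * ∑ E : Finset (Fin n), ∑ π ∈ fib hI E 1, q ^ inversions π := by
  rw [Finset.mul_sum]
  rw [← Finset.sum_fiberwise (Finset.univ.filter
      (fun π : Equiv.Perm (Fin n) => inducedEqFinset π (Eset i₀ m π) σ))
    (fun π : Equiv.Perm (Fin n) => Eset i₀ m π) (fun π => q ^ inversions π)]
  apply Finset.sum_congr rfl
  intro E _
  have hfe : ((Finset.univ.filter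
      (fun π : Equiv.Perm (Fin n) => inducedEqFinset π (Eset i₀ m π) σ)).filter
        (fun π => Eset i₀ m π = E)) = fib hI E σ := by
    rw [Finset.filter_filter, fib]
    apply Finset.filter_congr
    intro π _
    constructor
    · rintro ⟨h1, h2⟩; exact ⟨h2 ▸ h1, h2⟩
    · rintro ⟨h1, h2⟩; exact ⟨h2 ▸ h1, h2⟩
  rw [hfe, sum_fib hI hq E σ]

lemma card_filter_lt_eq_rank (hI : i₀ + m ≤ n) (π : Equiv.Perm (Fin n))
    {a : Fin m → Fin n} (ha : ∀ j : Fin m, (a j : ℕ) = i₀ + (j : ℕ)) (i : Fin m) :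
    ((Eset i₀ m π⁻¹).filter fun t => t < π (a i)).card
      = (Finset.univ.filter fun l : Fin m => π (a l) < π (a i)).card := by
  symm
  apply Finset.card_bij (fun (l : Fin m) _ => π (a l))
  · intro l hl
    simp only [mem_filter, mem_univ, true_and] at hl ⊢
    refine ⟨mem_Eset.2 ?_, hl⟩
    rw [perm_inv_apply_self, ha l]
    have := l.is_lt
    omega
  · intro l1 _ l2 _ hl
    have := π.injective hl
    apply Fin.ext
    have h1 := ha l1
    have h2 := ha l2
    have := congrArg Fin.val this
    omega
  · intro t ht
    simp only [mem_filter] at ht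
    obtain ⟨ht1, ht2⟩ := ht
    have hm := mem_Eset.1 ht1
    refine ⟨⟨(π⁻¹ t : Fin n) - i₀, by omega⟩, Finset.mem_filter.2 ⟨Finset.mem_univ _, ?_⟩, ?_⟩
    · have hav : a ⟨(π⁻¹ t : Fin n) - i₀, by omega⟩ = π⁻¹ t := by
        apply Fin.ext
        rw [ha]
        simp only
        omega
      rw [hav, perm_apply_inv_self]
      exact ht2
    · have hav : a ⟨(π⁻¹ t : Fin n) - i₀, by omega⟩ = π⁻¹ t := by
        apply Fin.ext
        rw [ha]
        simp only
        omega
      rw [hav, perm_apply_inv_self]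

lemma eqOn_iff (hI : i₀ + m ≤ n) (π : Equiv.Perm (Fin n)) (σ : Equiv.Perm (Fin m))
    {a : Fin m → Fin n} (ha : ∀ j : Fin m, (a j : ℕ) = i₀ + (j : ℕ)) :
    inducedEqOn π a σ ↔ inducedEqFinset π⁻¹ (Eset i₀ m π⁻¹) σ⁻¹ := by
  rw [inducedEqFinset_iff_vals hI rfl σ⁻¹]
  constructor
  · intro h j hj
    have hm := mem_Eset.1 hj
    have hvlt : (π⁻¹ j : Fin n).val - i₀ < m := by omega
    set v : Fin m := ⟨(π⁻¹ j : Fin n) - i₀, hvlt⟩ with hv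
    have hav : a v = π⁻¹ j := by
      apply Fin.ext
      rw [ha]
      show i₀ + ((π⁻¹ j : Fin n).val - i₀) = _
      omega
    have hπav : π (a v) = j := by rw [hav, perm_apply_inv_self]
    have hrank := card_filter_lt_eq_rank hI π ha v
    rw [hπav] at hrank
    have h6 := h v
    rw [hπav] at h6
    have hpos : (⟨((Eset i₀ m π⁻¹).filter fun t => t < j).card,
        pos_lt (card_Eset hI π⁻¹) hj⟩ : Fin m) = σ v := Fin.ext (hrank.trans h6)
    rw [hpos, perm_inv_apply_self]
    show (π⁻¹ j : Fin n).val = i₀ + ((π⁻¹ j : Fin n).val - i₀)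
    omega
  · intro h i
    have hj : π (a i) ∈ Eset i₀ m π⁻¹ := by
      rw [mem_Eset, perm_inv_apply_self, ha i]
      have := i.is_lt
      omega
    have h2 := h (π (a i)) hj
    rw [perm_inv_apply_self, ha i] at h2
    have h3 : (i : ℕ) = ((σ⁻¹ (⟨((Eset i₀ m π⁻¹).filter fun t => t < π (a i)).card,
        pos_lt (card_Eset hI π⁻¹) hj⟩ : Fin m)) : ℕ) := Nat.add_left_cancel h2
    have h4 : σ⁻¹ (⟨((Eset i₀ m π⁻¹).filter fun t => t < π (a i)).card,
        pos_lt (card_Eset hI π⁻¹) hj⟩ : Fin m) = i := Fin.ext h3.symm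
    have h5 : (⟨((Eset i₀ m π⁻¹).filter fun t => t < π (a i)).card,
        pos_lt (card_Eset hI π⁻¹) hj⟩ : Fin m) = σ i := by
      have h4' := congrArg σ h4
      rwa [perm_apply_inv_self] at h4'
    have h6 : ((Eset i₀ m π⁻¹).filter fun t => t < π (a i)).card = ((σ i : Fin m) : ℕ) :=
      congrArg Fin.val h5
    rw [← card_filter_lt_eq_rank hI π ha i]
    exact h6

open scoped Classical in
lemma sum_stmt1 (hI : i₀ + m ≤ n) (hq : 0 < q) (σ : Equiv.Perm (Fin m))
    {a : Fin m → Fin n} (ha : ∀ j : Fin m, (a j : ℕ) = i₀ + (j : ℕ)) :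
    ∑ π ∈ Finset.univ.filter (fun π : Equiv.Perm (Fin n) => inducedEqOn π a σ),
        q ^ inversions π
      = ∑ π ∈ Finset.univ.filter
          (fun π : Equiv.Perm (Fin n) => inducedEqFinset π (Eset i₀ m π) σ⁻¹),
          q ^ inversions π := by
  apply Finset.sum_nbij' (i := fun π : Equiv.Perm (Fin n) => π⁻¹)
    (j := fun π : Equiv.Perm (Fin n) => π⁻¹)
  · intro π hπ
    rw [Finset.mem_filter] at hπ ⊢
    exact ⟨Finset.mem_univ _, (eqOn_iff hI π σ ha).1 hπ.2⟩
  · intro ψ hψ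
    rw [Finset.mem_filter] at hψ ⊢
    refine ⟨Finset.mem_univ _, ?_⟩
    rw [eqOn_iff hI ψ⁻¹ σ ha, inv_inv]
    exact hψ.2
  · intro π _; rw [inv_inv]
  · intro π _; rw [inv_inv]
  · intro π _; rw [inversions_inv]


lemma Zpos {k : ℕ} (hq : 0 < q) : 0 < ∑ τ : Equiv.Perm (Fin k), q ^ inversions τ :=
  Finset.sum_pos (fun τ _ => pow_pos hq _) ⟨1, Finset.mem_univ 1⟩

lemma mallows_nonneg {k : ℕ} (hq : 0 < q) (σ : Equiv.Perm (Fin k)) :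
    0 ≤ mallowsProb k q σ :=
  div_nonneg (le_of_lt (pow_pos hq _)) (le_of_lt (Zpos hq))

lemma mallows_total {k : ℕ} (hq : 0 < q) :
    ∑ σ : Equiv.Perm (Fin k), mallowsProb k q σ = 1 := by
  have h := Zpos (k := k) hq
  simp only [mallowsProb]
  rw [← Finset.sum_div, div_self (ne_of_gt h)]

open scoped Classical in
lemma sumC_pos (hI : i₀ + m ≤ n) (hq : 0 < q) :
    0 < ∑ E : Finset (Fin n), ∑ π ∈ fib hI E 1, q ^ inversions π := by
  by_contra hc
  push_neg at hc
  have h1 := sum_univ_decomp (q := q) hI hq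
  have h2 : (∑ τ : Equiv.Perm (Fin m), q ^ inversions τ) *
      (∑ E : Finset (Fin n), ∑ π ∈ fib hI E 1, q ^ inversions π) ≤ 0 :=
    mul_nonpos_of_nonneg_of_nonpos (le_of_lt (Zpos hq)) hc
  rw [← h1] at h2
  exact absurd h2 (not_le.2 (Zpos hq))

open scoped Classical in
lemma real_stmt2 (hI : i₀ + m ≤ n) (hq : 0 < q) (σ : Equiv.Perm (Fin m)) :
    ∑ π ∈ Finset.univ.filter
        (fun π : Equiv.Perm (Fin n) => inducedEqFinset π (Eset i₀ m π) σ),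
        mallowsProb n q π = mallowsProb m q σ := by
  have h1 : ∀ A : Finset (Equiv.Perm (Fin n)), ∑ π ∈ A, mallowsProb n q π
      = (∑ π ∈ A, q ^ inversions π) / ∑ τ : Equiv.Perm (Fin n), q ^ inversions τ := by
    intro A
    rw [Finset.sum_div]
    rfl
  rw [h1, sum_stmt2 hI hq σ, sum_univ_decomp (q := q) hI hq, mallowsProb]
  have hS := sumC_pos hI hq
  rw [mul_comm (∑ τ : Equiv.Perm (Fin m), q ^ inversions τ), mul_comm (q ^ inversions σ)]
  exact mul_div_mul_left _ _ (ne_of_gt hS)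

open scoped Classical in
lemma real_stmt1 (hI : i₀ + m ≤ n) (hq : 0 < q) (σ : Equiv.Perm (Fin m))
    {a : Fin m → Fin n} (ha : ∀ j : Fin m, (a j : ℕ) = i₀ + (j : ℕ)) :
    ∑ π ∈ Finset.univ.filter (fun π : Equiv.Perm (Fin n) => inducedEqOn π a σ),
        mallowsProb n q π = mallowsProb m q σ := by
  have h1 : ∀ A : Finset (Equiv.Perm (Fin n)), ∑ π ∈ A, mallowsProb n q π
      = (∑ π ∈ A, q ^ inversions π) / ∑ τ : Equiv.Perm (Fin n), q ^ inversions τ := by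
    intro A
    rw [Finset.sum_div]
    rfl
  rw [h1, sum_stmt1 hI hq σ ha, sum_stmt2 hI hq σ⁻¹, inversions_inv,
    sum_univ_decomp (q := q) hI hq, mallowsProb]
  have hS := sumC_pos hI hq
  rw [mul_comm (∑ τ : Equiv.Perm (Fin m), q ^ inversions τ), mul_comm (q ^ inversions σ)]
  exact mul_div_mul_left _ _ (ne_of_gt hS)

open scoped Classical in
lemma real_stmt3 (hI : i₀ + m ≤ n) (hq : 0 < q) (E : Finset (Fin n))
    (σ : Equiv.Perm (Fin m)) :
    ∑ π ∈ fib hI E σ, mallowsProb n q π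
      = mallowsProb m q σ *
          ∑ π ∈ Finset.univ.filter (fun π : Equiv.Perm (Fin n) => Eset i₀ m π = E),
            mallowsProb n q π := by
  have h1 : ∀ A : Finset (Equiv.Perm (Fin n)), ∑ π ∈ A, mallowsProb n q π
      = (∑ π ∈ A, q ^ inversions π) / ∑ τ : Equiv.Perm (Fin n), q ^ inversions τ := by
    intro A
    rw [Finset.sum_div]
    rfl
  rw [h1, h1, sum_fib hI hq E σ, sum_Eset_fiber hI hq E, mallowsProb]
  have hZm := Zpos (k := m) hq
  have hZn := Zpos (k := n) hq
  field_simp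

/-- probability of a finite event under a Mallows random permutation. -/
lemma prob_mem_finset {Ω : Type*} [MeasurableSpace Ω] (ℙ : Measure Ω)
    [IsProbabilityMeasure ℙ] {k : ℕ} (hq : 0 < q) (X : Ω → Equiv.Perm (Fin k))
    (hX : IsMallows ℙ q X) (A : Finset (Equiv.Perm (Fin k))) :
    (ℙ {ω | X ω ∈ A}).toReal = ∑ π ∈ A, mallowsProb k q π := by
  classical
  have hupper : ∀ B : Finset (Equiv.Perm (Fin k)),
      (ℙ {ω | X ω ∈ B}).toReal ≤ ∑ π ∈ B, mallowsProb k q π := by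
    intro B
    have hsub : {ω | X ω ∈ B} ⊆ ⋃ π ∈ B, {ω | X ω = π} := by
      intro ω hω
      exact Set.mem_biUnion hω rfl
    have hle : ℙ {ω | X ω ∈ B} ≤ ∑ π ∈ B, ℙ {ω | X ω = π} :=
      le_trans (measure_mono hsub) (measure_biUnion_finset_le B _)
    have h2 : (ℙ {ω | X ω ∈ B}).toReal ≤ (∑ π ∈ B, ℙ {ω | X ω = π}).toReal :=
      ENNReal.toReal_mono (by
        rw [← lt_top_iff_ne_top]
        exact ENNReal.sum_lt_top.2 fun π _ => measure_lt_top ℙ _) hle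
    rw [ENNReal.toReal_sum (fun π _ => measure_ne_top ℙ _)] at h2
    calc (ℙ {ω | X ω ∈ B}).toReal ≤ ∑ π ∈ B, (ℙ {ω | X ω = π}).toReal := h2
      _ = ∑ π ∈ B, mallowsProb k q π := Finset.sum_congr rfl fun π _ => hX π
  have hcover : (Set.univ : Set Ω) ⊆ {ω | X ω ∈ A} ∪ {ω | X ω ∈ Aᶜ} := by
    intro ω _
    by_cases h : X ω ∈ A
    · exact Or.inl h
    · exact Or.inr (Finset.mem_compl.2 h)
  have h1 : (1 : ℝ) ≤ (ℙ {ω | X ω ∈ A}).toReal + (ℙ {ω | X ω ∈ Aᶜ}).toReal := by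
    have hle : ℙ (Set.univ : Set Ω) ≤ ℙ {ω | X ω ∈ A} + ℙ {ω | X ω ∈ Aᶜ} :=
      le_trans (measure_mono hcover) (measure_union_le _ _)
    have h2 := ENNReal.toReal_mono
      (ENNReal.add_ne_top.2 ⟨measure_ne_top _ _, measure_ne_top _ _⟩) hle
    rw [measure_univ, ENNReal.toReal_one,
      ENNReal.toReal_add (measure_ne_top _ _) (measure_ne_top _ _)] at h2
    exact h2
  have hsplit : ∑ π ∈ A, mallowsProb k q π + ∑ π ∈ Aᶜ, mallowsProb k q π = 1 := by
    rw [Finset.sum_add_sum_compl]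
    exact mallows_total hq
  have := hupper A
  have := hupper Aᶜ
  linarith

end MallowsAux

/-- **Lemma 2.7.** Let `I = (i₀+1, …, i₀+m) ⊆ [n]` be consecutive indices (0-based:
`{t | i₀ ≤ t < i₀ + m}`).  If `π ~ μ_{n,q}`, then `π_I ~ μ_{m,q}` and
`π_{π⁻¹(I)} ~ μ_{m,q}`; moreover, conditioned on `π⁻¹(I) = E` (for any fixed `E` of size `m`),
the induced permutation `π_E` is still `μ_{m,q}`-distributed. -/
theorem mallows_induced_consecutive
    {Ω : Type*} [MeasurableSpace Ω] (ℙ : Measure Ω) [IsProbabilityMeasure ℙ]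
    {n m i₀ : ℕ} (hI : i₀ + m ≤ n) (q : ℝ) (hq : 0 < q)
    (X : Ω → Equiv.Perm (Fin n)) (hX : IsMallows ℙ q X) :
    (∀ σ : Equiv.Perm (Fin m),
      (ℙ {ω | inducedEqOn (X ω)
          (fun j : Fin m => (⟨i₀ + (j : ℕ), lt_of_lt_of_le (Nat.add_lt_add_left j.isLt i₀) hI⟩ :
            Fin n)) σ}).toReal = mallowsProb m q σ) ∧
    (∀ σ : Equiv.Perm (Fin m),
      (ℙ {ω | inducedEqFinset (X ω)
          (Finset.univ.filter fun t : Fin n => i₀ ≤ (X ω t : ℕ) ∧ (X ω t : ℕ) < i₀ + m)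
          σ}).toReal = mallowsProb m q σ) ∧
    (∀ (E : Finset (Fin n)), E.card = m → ∀ σ : Equiv.Perm (Fin m),
      ℙ {ω | inducedEqFinset (X ω) E σ ∧
          (Finset.univ.filter fun t : Fin n => i₀ ≤ (X ω t : ℕ) ∧ (X ω t : ℕ) < i₀ + m) = E} =
        ENNReal.ofReal (mallowsProb m q σ) *
          ℙ {ω | (Finset.univ.filter fun t : Fin n =>
              i₀ ≤ (X ω t : ℕ) ∧ (X ω t : ℕ) < i₀ + m) = E}) := by
  classical
  refine ⟨fun σ => ?_, fun σ => ?_, fun E _ σ => ?_⟩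
  · have hset : {ω | inducedEqOn (X ω)
        (fun j : Fin m => (⟨i₀ + (j : ℕ), lt_of_lt_of_le (Nat.add_lt_add_left j.isLt i₀) hI⟩ :
          Fin n)) σ}
        = {ω | X ω ∈ Finset.univ.filter (fun π : Equiv.Perm (Fin n) => inducedEqOn π
          (fun j : Fin m => (⟨i₀ + (j : ℕ), lt_of_lt_of_le (Nat.add_lt_add_left j.isLt i₀) hI⟩ :
            Fin n)) σ)} := by
      ext ω; simp
    rw [hset, MallowsAux.prob_mem_finset ℙ hq X hX,
      MallowsAux.real_stmt1 hI hq σ (fun j => rfl)]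
  · have hset : {ω | inducedEqFinset (X ω)
        (Finset.univ.filter fun t : Fin n => i₀ ≤ (X ω t : ℕ) ∧ (X ω t : ℕ) < i₀ + m) σ}
        = {ω | X ω ∈ Finset.univ.filter
            (fun π : Equiv.Perm (Fin n) => inducedEqFinset π (MallowsAux.Eset i₀ m π) σ)} := by
      ext ω; exact ⟨fun h => Finset.mem_filter.2 ⟨Finset.mem_univ _, h⟩, fun h => (Finset.mem_filter.1 h).2⟩
    rw [hset, MallowsAux.prob_mem_finset ℙ hq X hX, MallowsAux.real_stmt2 hI hq σ]
  · have hset1 : {ω | inducedEqFinset (X ω) E σ ∧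
        (Finset.univ.filter fun t : Fin n => i₀ ≤ (X ω t : ℕ) ∧ (X ω t : ℕ) < i₀ + m) = E}
        = {ω | X ω ∈ MallowsAux.fib hI E σ} := by
      ext ω; exact ⟨fun h => Finset.mem_filter.2 ⟨Finset.mem_univ _, h⟩, fun h => (Finset.mem_filter.1 h).2⟩
    have hset2 : {ω | (Finset.univ.filter
          fun t : Fin n => i₀ ≤ (X ω t : ℕ) ∧ (X ω t : ℕ) < i₀ + m) = E}
        = {ω | X ω ∈ Finset.univ.filter
            (fun π : Equiv.Perm (Fin n) => MallowsAux.Eset i₀ m π = E)} := by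
      ext ω; exact ⟨fun h => Finset.mem_filter.2 ⟨Finset.mem_univ _, h⟩, fun h => (Finset.mem_filter.1 h).2⟩
    rw [hset1, hset2,
      ← ENNReal.ofReal_toReal (measure_ne_top ℙ {ω | X ω ∈ MallowsAux.fib hI E σ}),
      ← ENNReal.ofReal_toReal (measure_ne_top ℙ {ω | X ω ∈ Finset.univ.filter
          (fun π : Equiv.Perm (Fin n) => MallowsAux.Eset i₀ m π = E)}),
      ← ENNReal.ofReal_mul (MallowsAux.mallows_nonneg hq σ)]
    congr 1
    rw [MallowsAux.prob_mem_finset ℙ hq X hX, MallowsAux.prob_mem_finset ℙ hq X hX,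
      MallowsAux.real_stmt3 hI hq E σ]
end

section
/- Define, for β > 0, J̄(β) = √(β/(6 sinh(β/2))) · ∫_0^1 √(cosh(β/2) + 2 cosh(β(2x-1)/2)) dx. Then lim_{β → ∞} J̄(β)/√β = 1/√6. -/
open Filter

/-- `J̄(β) = √(β/(6 sinh(β/2))) ∫₀¹ √(cosh(β/2) + 2 cosh(β(2x-1)/2)) dx`. -/
noncomputable def Jbar (β : ℝ) : ℝ :=
  Real.sqrt (β / (6 * Real.sinh (β / 2))) *
    ∫ x in (0:ℝ)..1, Real.sqrt (Real.cosh (β / 2) + 2 * Real.cosh (β * (2 * x - 1) / 2))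

lemma exp_mul_tendsto {a : ℝ} (ha : a < 0) :
    Tendsto (fun β : ℝ => Real.exp (β * a)) atTop (nhds 0) :=
  Real.tendsto_exp_atBot.comp ((tendsto_mul_const_atBot_of_neg ha).2 tendsto_id)

lemma ratio_tendsto {c : ℝ} (hc : |c| < 1/2) :
    Tendsto (fun β : ℝ => (Real.cosh (β/2) + 2*Real.cosh (β*c)) / (6*Real.sinh (β/2)))
      atTop (nhds (1/6)) := by
  obtain ⟨hc1, hc2⟩ := abs_lt.1 hc
  have h1 : Tendsto (fun β : ℝ =>
      ((1 + Real.exp (β * (-1)))/2 + Real.exp (β*(c-1/2)) + Real.exp (β*(-c-1/2))) /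
        (3*(1 - Real.exp (β*(-1))))) atTop (nhds (1/6)) := by
    have e1 := exp_mul_tendsto (show (-1:ℝ) < 0 by norm_num)
    have e2 := exp_mul_tendsto (show c - 1/2 < 0 by linarith)
    have e3 := exp_mul_tendsto (show -c - 1/2 < 0 by linarith)
    have h := (((((tendsto_const_nhds (x := (1:ℝ))).add e1).div_const 2).add e2).add e3).div
      (((tendsto_const_nhds (x := (1:ℝ))).sub e1).const_mul 3) (by norm_num : (3:ℝ)*((1:ℝ)-0) ≠ 0)
    convert h using 2 <;> norm_num
  refine h1.congr' ?_
  filter_upwards [eventually_gt_atTop 0] with β hβ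
  have hu : (0:ℝ) < Real.exp (β/2) := Real.exp_pos _
  have hv : (0:ℝ) < Real.exp (β*c) := Real.exp_pos _
  have h1e : Real.exp (β*(-1)) = (Real.exp (β/2))⁻¹ * (Real.exp (β/2))⁻¹ := by
    rw [← Real.exp_neg, ← Real.exp_add]; ring_nf
  have h2e : Real.exp (β*(c-1/2)) = Real.exp (β*c) * (Real.exp (β/2))⁻¹ := by
    rw [← Real.exp_neg, ← Real.exp_add]; ring_nf
  have h3e : Real.exp (β*(-c-1/2)) = (Real.exp (β*c))⁻¹ * (Real.exp (β/2))⁻¹ := by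
    rw [← Real.exp_neg, ← Real.exp_neg, ← Real.exp_add]; ring_nf
  have hcosh1 : Real.cosh (β/2) = (Real.exp (β/2) + (Real.exp (β/2))⁻¹)/2 := by
    rw [Real.cosh_eq, Real.exp_neg]
  have hcosh2 : Real.cosh (β*c) = (Real.exp (β*c) + (Real.exp (β*c))⁻¹)/2 := by
    rw [Real.cosh_eq, Real.exp_neg]
  have hsinh : Real.sinh (β/2) = (Real.exp (β/2) - (Real.exp (β/2))⁻¹)/2 := by
    rw [Real.sinh_eq, Real.exp_neg]
  have hsp : (0:ℝ) < Real.sinh (β/2) := Real.sinh_pos_iff.2 (by linarith)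
  have hd1 : (6:ℝ) * Real.sinh (β/2) ≠ 0 := by positivity
  have hexplt : Real.exp (β * (-1)) < 1 := by
    rw [Real.exp_lt_one_iff]; nlinarith
  have hd2 : (3:ℝ)*(1 - Real.exp (β*(-1))) ≠ 0 := by nlinarith
  rw [div_eq_div_iff hd2 hd1, h1e, h2e, h3e, hcosh1, hcosh2, hsinh]
  field_simp
  ring

/-- **Limit of `J̄(β)/√β` as `β → ∞`:** `lim_{β→∞} J̄(β)/√β = 1/√6`. -/
theorem Jbar_limit :
    Tendsto (fun β : ℝ => Jbar β / Real.sqrt β) atTop (nhds (1 / Real.sqrt 6)) := by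
  have key : Tendsto (fun β : ℝ => ∫ x in (0:ℝ)..1,
      Real.sqrt ((Real.cosh (β/2) + 2*Real.cosh (β*(2*x-1)/2)) / (6*Real.sinh (β/2))))
      atTop (nhds (1/Real.sqrt 6)) := by
    have h6 : (1:ℝ)/Real.sqrt 6 = ∫ _x in (0:ℝ)..1, (1/Real.sqrt 6 : ℝ) := by simp
    rw [h6]
    apply intervalIntegral.tendsto_integral_filter_of_dominated_convergence (fun _ => (1:ℝ))
    · filter_upwards with β
      apply Continuous.aestronglyMeasurable
      fun_prop
    · filter_upwards [eventually_ge_atTop (2:ℝ)] with β hβ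
      refine MeasureTheory.ae_of_all _ fun x hx => ?_
      rw [Set.uIoc_of_le (by norm_num : (0:ℝ) ≤ 1)] at hx
      have hβ0 : (0:ℝ) < β := by linarith
      have hsp : (0:ℝ) < Real.sinh (β/2) := Real.sinh_pos_iff.2 (by linarith)
      rw [Real.norm_eq_abs, abs_of_nonneg (Real.sqrt_nonneg _)]
      rw [Real.sqrt_le_one]
      rw [div_le_one (by positivity)]
      have hx1 : |2*x-1| ≤ 1 := by
        rw [abs_le]; constructor <;> nlinarith [hx.1, hx.2]
      have hcc : Real.cosh (β*(2*x-1)/2) ≤ Real.cosh (β/2) := by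
        apply Real.cosh_le_cosh.2
        rw [abs_div, abs_mul, abs_of_pos hβ0, abs_of_pos (show (0:ℝ) < 2 by norm_num),
          abs_of_pos (show (0:ℝ) < β/2 by linarith)]
        calc β * |2*x-1| / 2 ≤ β * 1 / 2 := by gcongr
          _ = β / 2 := by ring
      have hc2s : Real.cosh (β/2) ≤ 2 * Real.sinh (β/2) := by
        rw [Real.cosh_eq, Real.sinh_eq]
        have h3 : (3:ℝ) ≤ Real.exp β := by
          have := Real.add_one_le_exp β; linarith
        have hu : (0:ℝ) < Real.exp (β/2) := Real.exp_pos _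
        have hee : Real.exp β = Real.exp (β/2) * Real.exp (β/2) := by
          rw [← Real.exp_add]; ring_nf
        rw [hee] at h3
        rw [Real.exp_neg]
        have hinv : Real.exp (β/2) * (Real.exp (β/2))⁻¹ = 1 := mul_inv_cancel₀ hu.ne'
        nlinarith [inv_pos.2 hu]
      linarith
    · exact intervalIntegrable_const
    · have h1 : ∀ᵐ x : ℝ, x ≠ (1:ℝ) := by
        refine MeasureTheory.ae_iff.2 ?_
        simp
      filter_upwards [h1] with x hx1 hx
      rw [Set.uIoc_of_le (by norm_num : (0:ℝ) ≤ 1)] at hx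
      have hxlt : x < 1 := lt_of_le_of_ne hx.2 hx1
      have hcabs : |(2*x-1)/2| < 1/2 := by
        rw [abs_lt]
        constructor <;> [linarith [hx.1]; linarith]
      have := (ratio_tendsto hcabs).sqrt
      rw [show Real.sqrt (1/6) = 1/Real.sqrt 6 by
        rw [one_div, one_div, Real.sqrt_inv]] at this
      refine this.congr fun β => ?_
      congr 3
      ring
  refine key.congr' ?_
  filter_upwards [eventually_gt_atTop 0] with β hβ
  have hsp : (0:ℝ) < Real.sinh (β/2) := Real.sinh_pos_iff.2 (by linarith)
  have hI : ∫ x in (0:ℝ)..1,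
      Real.sqrt ((Real.cosh (β/2) + 2*Real.cosh (β*(2*x-1)/2)) / (6*Real.sinh (β/2)))
      = (∫ x in (0:ℝ)..1,
        Real.sqrt (Real.cosh (β/2) + 2*Real.cosh (β*(2*x-1)/2))) / Real.sqrt (6*Real.sinh (β/2)) := by
    rw [← intervalIntegral.integral_div]
    apply intervalIntegral.integral_congr
    intro x _
    dsimp only
    rw [Real.sqrt_div (by positivity)]
  rw [hI]
  show _ = Jbar β / Real.sqrt β
  unfold Jbar
  rw [Real.sqrt_div hβ.le]
  have hb : Real.sqrt β ≠ 0 := by positivity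
  have hs6 : Real.sqrt (6*Real.sinh (β/2)) ≠ 0 := by positivity
  field_simp
end

section
/- Fix q, q' ∈ (0,1). Let M⊗_n = (M_n, M'_n) be the product Markov chain started at (0,0), where M_n = max{M_{n-1}, Z_n} - 1 with Z_n i.i.d. Geom(1-q) and M'_n = max{M'_{n-1}, Z'_n} - 1 with Z'_n i.i.d. Geom(1-q'), and let R_0^+ = min{k > 0 : M⊗_k = (0,0)} be its first return time to (0,0). Let T_1 be the first regeneration time of two independent infinite Mallows permutations with parameters q and q'. Then R_0^+ and T_1 have the same distribution. -/
open MeasureTheory Filter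

/-- The infinite Mallows(`q`) permutation built from i.i.d. Geom(`1-q`) variables `Z i` by the
insertion rule (everything `0`-indexed). -/
structure InfMallows (Ω : Type*) [MeasurableSpace Ω] (ℙ : Measure Ω) (q : ℝ) where
  Z : ℕ → Ω → ℕ
  Pi : Ω → ℕ → ℕ
  meas : ∀ i, Measurable (Z i)
  geom : ∀ (i : ℕ) (k : ℕ), 1 ≤ k → (ℙ {ω | Z i ω = k}).toReal = (1 - q) * q ^ (k - 1)
  indep : ProbabilityTheory.iIndepFun Z ℙ
  hins : ∀ (ω : Ω) (i : ℕ),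
    Pi ω i = Nat.nth (fun x => ∀ j < i, Pi ω j ≠ x) (Z i ω - 1)

/-- The Markov chain `M_n = max(M_{n-1}, Z_n) - 1` started at `a`, driven by the sample path
`z` of the geometric variables. -/
def chainM (a : ℕ) (z : ℕ → ℕ) : ℕ → ℕ
  | 0 => a
  | n + 1 => max (chainM a z n) (z n) - 1

lemma chainM_le_iff (z : ℕ → ℕ) : ∀ (j c : ℕ), chainM 0 z j ≤ c ↔ ∀ i < j, z i ≤ c + (j - i) := by
  intro j
  induction j with
  | zero => simp [chainM]
  | succ j ih =>
    intro c
    have h1 : chainM 0 z (j+1) ≤ c ↔ chainM 0 z j ≤ c + 1 ∧ z j ≤ c + 1 := by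
      simp only [chainM, Nat.sub_le_iff_le_add, max_le_iff]
    rw [h1, ih (c+1)]
    constructor
    · rintro ⟨h2, h3⟩ i hi
      rcases Nat.lt_succ_iff_lt_or_eq.mp hi with hi' | rfl
      · have := h2 i hi'
        omega
      · simpa using h3
    · intro h
      refine ⟨fun i hi => ?_, ?_⟩
      · have := h i (hi.trans (Nat.lt_succ_self j))
        omega
      · simpa using h j (Nat.lt_succ_self j)

lemma chainM_eq_zero_iff (z : ℕ → ℕ) (j : ℕ) :
    chainM 0 z j = 0 ↔ ∀ i < j, z i ≤ j - i := by
  rw [← Nat.le_zero, chainM_le_iff]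
  simp

section Mallows

variable (P : ℕ → ℕ) (ζ : ℕ → ℕ)
  (hins : ∀ i, P i = Nat.nth (fun x => ∀ j < i, P j ≠ x) (ζ i - 1))

lemma p_infinite (i : ℕ) : {x | ∀ j < i, P j ≠ x}.Infinite := by
  have hsub : {x | ¬ ∀ j < i, P j ≠ x} ⊆ P '' (Set.Iio i) := by
    intro x hx
    push_neg at hx
    obtain ⟨j, hj, hjx⟩ := hx
    exact ⟨j, hj, hjx⟩
  have hfin : {x | ¬ ∀ j < i, P j ≠ x}.Finite :=
    Set.Finite.subset ((Set.finite_Iio i).image P) hsub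
  have := hfin.infinite_compl
  simpa [Set.compl_setOf] using this

include hins in
lemma p_mem (i : ℕ) : ∀ j < i, P j ≠ P i := by
  have := Nat.nth_mem_of_infinite (p_infinite P i) (ζ i - 1)
  rwa [← hins i] at this

include hins in
lemma count_p (j k : ℕ) (hk : k ≤ j) (hA : ∀ k' < k, P k' < j) :
    Nat.count (fun x => ∀ j' < k, P j' ≠ x) j = j - k := by
  classical
  rw [Nat.count_eq_card_filter_range]
  have himg : (Finset.range k).image P ⊆ Finset.range j := by
    intro x hx
    simp only [Finset.mem_image, Finset.mem_range] at hx ⊢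
    obtain ⟨i, hi, rfl⟩ := hx
    exact hA i hi
  have hfe : (Finset.range j).filter (fun x => ∀ j' < k, P j' ≠ x)
      = Finset.range j \ (Finset.range k).image P := by
    ext x
    simp only [Finset.mem_filter, Finset.mem_sdiff, Finset.mem_image, Finset.mem_range]
    constructor
    · rintro ⟨hx, h⟩
      exact ⟨hx, by rintro ⟨i, hi, rfl⟩; exact h i hi rfl⟩
    · rintro ⟨hx, h⟩
      exact ⟨hx, fun i hi hix => h ⟨i, hi, hix⟩⟩
  have hcard : ((Finset.range k).image P).card = k := by
    rw [Finset.card_image_of_injOn, Finset.card_range]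
    intro a ha b hb hab
    simp only [Finset.coe_range, Set.mem_Iio] at ha hb
    by_contra hne
    rcases Nat.lt_or_ge a b with h | h
    · exact p_mem P ζ hins b a h hab
    · exact p_mem P ζ hins a b (lt_of_le_of_ne h (Ne.symm hne)) hab.symm
  rw [hfe, Finset.card_sdiff_of_subset himg, hcard, Finset.card_range]

include hins in
lemma mallows_block (j : ℕ) :
    (∀ k < j, P k < j) ↔ ∀ i < j, ζ i - 1 < j - i := by
  constructor
  · intro hA i hi
    have hcount : Nat.count (fun x => ∀ j' < i, P j' ≠ x) j = j - i :=
      count_p P ζ hins j i hi.le (fun k' hk' => hA k' (hk'.trans hi))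
    have hPi : P i < j := hA i hi
    have hmem : (fun x => ∀ j' < i, P j' ≠ x) (P i) := fun j' hj' => p_mem P ζ hins i j' hj'
    have h1 : Nat.count (fun x => ∀ j' < i, P j' ≠ x) (P i) = ζ i - 1 := by
      rw [hins i]
      exact Nat.count_nth_of_infinite (p_infinite P i) _
    have h2 : Nat.count (fun x => ∀ j' < i, P j' ≠ x) (P i) + 1
        ≤ Nat.count (fun x => ∀ j' < i, P j' ≠ x) j := by
      classical
      calc Nat.count (fun x => ∀ j' < i, P j' ≠ x) (P i) + 1
          = Nat.count (fun x => ∀ j' < i, P j' ≠ x) (P i + 1) := by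
            rw [Nat.count_succ, if_pos hmem]
        _ ≤ _ := Nat.count_monotone _ hPi
    omega
  · intro hB k
    induction k using Nat.strong_induction_on with
    | _ k ih =>
      intro hk
      have hcount : Nat.count (fun x => ∀ j' < k, P j' ≠ x) j = j - k :=
        count_p P ζ hins j k hk.le (fun k' hk' => ih k' hk' (hk'.trans hk))
      rw [hins k]
      exact Nat.nth_lt_of_lt_count (by rw [hcount]; exact hB k hk)

end Mallows
noncomputable def geomP (q : ℝ) (k : ℕ) : ENNReal :=
  if k = 0 then 0 else ENNReal.ofReal ((1 - q) * q ^ (k - 1))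

lemma geom_law {Ω : Type*} [MeasurableSpace Ω] (ℙ : Measure Ω) [IsProbabilityMeasure ℙ]
    (q : ℝ) (hq0 : 0 < q) (hq1 : q < 1) (V : Ω → ℕ) (hm : Measurable V)
    (hg : ∀ k, 1 ≤ k → (ℙ {ω | V ω = k}).toReal = (1 - q) * q ^ (k - 1)) :
    ∀ k, ℙ {ω | V ω = k} = geomP q k := by
  have hms : ∀ k, MeasurableSet {ω | V ω = k} := fun k => hm (measurableSet_singleton k)
  have hpos : ∀ k, ℙ {ω | V ω = k + 1} = ENNReal.ofReal ((1 - q) * q ^ k) := by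
    intro k
    have := hg (k + 1) (Nat.le_add_left 1 k)
    rw [← ENNReal.ofReal_toReal (measure_ne_top ℙ _), this]
    simp
  have hzero : ℙ {ω | V ω = 0} = 0 := by
    have hdisj : Pairwise (Function.onFun Disjoint (fun k => {ω | V ω = k})) := by
      intro a b hab
      simp only [Function.onFun, Set.disjoint_left]
      rintro ω (h1 : V ω = a) (h2 : V ω = b)
      exact hab (h1 ▸ h2 ▸ rfl)
    have huniv : (⋃ k, {ω | V ω = k}) = Set.univ := by
      ext ω; simp
    have hsum : ∑' k, ℙ {ω | V ω = k} = 1 := by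
      rw [← measure_iUnion hdisj hms, huniv, measure_univ]
    have hsplit : ∑' k, ℙ {ω | V ω = k}
        = ℙ {ω | V ω = 0} + ∑' k, ℙ {ω | V ω = k + 1} :=
      tsum_eq_zero_add' ENNReal.summable
    have htail : ∑' k, ℙ {ω | V ω = k + 1} = 1 := by
      simp only [hpos]
      rw [← ENNReal.ofReal_tsum_of_nonneg]
      · rw [tsum_mul_left, tsum_geometric_of_lt_one hq0.le hq1]
        rw [mul_inv_cancel₀ (by linarith), ENNReal.ofReal_one]
      · intro k
        have h1q : (0:ℝ) ≤ 1 - q := by linarith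
        positivity
      · exact (summable_geometric_of_lt_one hq0.le hq1).mul_left _
    rw [hsplit, htail] at hsum
    have hc := ENNReal.add_sub_cancel_right (a := ℙ {ω | V ω = 0}) (b := (1:ENNReal))
      ENNReal.one_ne_top
    rw [hsum] at hc
    simpa using hc.symm
  intro k
  cases k with
  | zero => simpa [geomP] using hzero
  | succ k => simpa [geomP] using hpos k

lemma cyl_prob {Ω : Type*} [MeasurableSpace Ω] (ℙ : Measure Ω)
    (V V' : ℕ → Ω → ℕ)
    (hindep : ProbabilityTheory.iIndepFun (Sum.elim V V') ℙ)
    (m : ℕ) (b b' : ℕ → ℕ) :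
    ℙ {ω | (∀ i < m, V i ω = b i) ∧ (∀ i < m, V' i ω = b' i)}
      = (∏ i ∈ Finset.range m, ℙ {ω | V i ω = b i}) *
        ∏ i ∈ Finset.range m, ℙ {ω | V' i ω = b' i} := by
  classical
  set el : ℕ ↪ ℕ ⊕ ℕ := ⟨Sum.inl, Sum.inl_injective⟩
  set er : ℕ ↪ ℕ ⊕ ℕ := ⟨Sum.inr, Sum.inr_injective⟩
  set S : Finset (ℕ ⊕ ℕ) := (Finset.range m).map el ∪ (Finset.range m).map er with hS
  set sets : ℕ ⊕ ℕ → Set ℕ := Sum.elim (fun i => {b i}) (fun i => {b' i}) with hsets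
  have hmeas : ∀ s, s ∈ S → MeasurableSet (sets s) := by
    rintro (i | i) _ <;> exact measurableSet_singleton _
  have key := hindep.measure_inter_preimage_eq_mul S hmeas
  have hset : (⋂ s ∈ S, Sum.elim V V' s ⁻¹' sets s)
      = {ω | (∀ i < m, V i ω = b i) ∧ (∀ i < m, V' i ω = b' i)} := by
    ext ω
    simp only [Set.mem_iInter, Set.mem_setOf_eq, hS, Finset.mem_union, Finset.mem_map,
      Finset.mem_range]
    constructor
    · intro h
      refine ⟨fun i hi => ?_, fun i hi => ?_⟩
      · have := h (Sum.inl i) (Or.inl ⟨i, hi, rfl⟩)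
        simpa [hsets] using this
      · have := h (Sum.inr i) (Or.inr ⟨i, hi, rfl⟩)
        simpa [hsets] using this
    · rintro ⟨h1, h2⟩ s hs
      rcases hs with ⟨i, hi, rfl⟩ | ⟨i, hi, rfl⟩
      · simpa [hsets, el] using h1 i hi
      · simpa [hsets, er] using h2 i hi
  have hdisj : Disjoint ((Finset.range m).map el) ((Finset.range m).map er) := by
    simp only [Finset.disjoint_left, Finset.mem_map]
    rintro x ⟨i, _, rfl⟩ ⟨j, _, h⟩
    exact Sum.inl_ne_inr h.symm
  rw [hset] at key
  rw [key, hS, Finset.prod_union hdisj, Finset.prod_map, Finset.prod_map]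
  rfl

def goodSet (z z' : ℕ → ℕ) : Set ℕ := {j | 0 < j ∧ ∀ i < j, z i ≤ j - i ∧ z' i ≤ j - i}

lemma zero_not_mem_goodSet (z z' : ℕ → ℕ) : 0 ∉ goodSet z z' := fun h => absurd h.1 (lt_irrefl 0)

lemma sInf_char (S : Set ℕ) (h0 : 0 ∉ S) (m : ℕ) (hm : 0 < m) :
    sInf S = m ↔ m ∈ S ∧ ∀ k < m, k ∉ S := by
  constructor
  · intro h
    have hne : S.Nonempty := by
      by_contra hne
      rw [Set.not_nonempty_iff_eq_empty] at hne
      rw [hne, Nat.sInf_empty] at h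
      omega
    refine ⟨h ▸ Nat.sInf_mem hne, fun k hk hkS => ?_⟩
    have := Nat.sInf_le hkS
    omega
  · rintro ⟨hmS, hlt⟩
    refine le_antisymm (Nat.sInf_le hmS) (le_of_not_gt fun hcon => ?_)
    exact hlt _ hcon (Nat.sInf_mem ⟨m, hmS⟩)

lemma sInf_char_zero (S : Set ℕ) (h0 : 0 ∉ S) :
    sInf S = 0 ↔ ∀ j, j ∉ S := by
  constructor
  · intro h j hj
    have := Nat.sInf_mem ⟨j, hj⟩
    rw [h] at this
    exact h0 this
  · intro h
    rw [Set.eq_empty_iff_forall_notMem.mpr h, Nat.sInf_empty]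

lemma goodSet_mem_local {z z' w w' : ℕ → ℕ} {m : ℕ}
    (h : ∀ i < m, z i = w i ∧ z' i = w' i) {j : ℕ} (hj : j ≤ m) :
    j ∈ goodSet z z' ↔ j ∈ goodSet w w' := by
  simp only [goodSet, Set.mem_setOf_eq]
  constructor <;> rintro ⟨h1, h2⟩ <;> refine ⟨h1, fun i hi => ?_⟩
  · have := h i (lt_of_lt_of_le hi hj)
    rw [← this.1, ← this.2]; exact h2 i hi
  · have := h i (lt_of_lt_of_le hi hj)
    rw [this.1, this.2]; exact h2 i hi

lemma sInf_goodSet_local {z z' w w' : ℕ → ℕ} {m : ℕ} (hm : 0 < m)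
    (h : ∀ i < m, z i = w i ∧ z' i = w' i) :
    sInf (goodSet z z') = m ↔ sInf (goodSet w w') = m := by
  rw [sInf_char _ (zero_not_mem_goodSet _ _) _ hm, sInf_char _ (zero_not_mem_goodSet _ _) _ hm]
  constructor <;> rintro ⟨h1, h2⟩
  · exact ⟨(goodSet_mem_local h le_rfl).mp h1,
      fun k hk hkw => h2 k hk ((goodSet_mem_local h hk.le).mpr hkw)⟩
  · exact ⟨(goodSet_mem_local h le_rfl).mpr h1,
      fun k hk hkz => h2 k hk ((goodSet_mem_local h hk.le).mp hkz)⟩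

def ext1 (m : ℕ) (a : Fin m → ℕ × ℕ) : ℕ → ℕ := fun i => if h : i < m then (a ⟨i, h⟩).1 else 0
def ext2 (m : ℕ) (a : Fin m → ℕ × ℕ) : ℕ → ℕ := fun i => if h : i < m then (a ⟨i, h⟩).2 else 0

lemma prob_sInf {Ω : Type*} [MeasurableSpace Ω] (ℙ : Measure Ω)
    (V V' : ℕ → Ω → ℕ) (hmV : ∀ i, Measurable (V i)) (hmV' : ∀ i, Measurable (V' i))
    (m : ℕ) (hm : 0 < m) :
    ℙ {ω | sInf (goodSet (fun i => V i ω) (fun i => V' i ω)) = m}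
      = ∑' a : {a : Fin m → ℕ × ℕ // sInf (goodSet (ext1 m a) (ext2 m a)) = m},
          ℙ {ω | (∀ i < m, V i ω = ext1 m a.1 i) ∧ (∀ i < m, V' i ω = ext2 m a.1 i)} := by
  classical
  set cyl : (Fin m → ℕ × ℕ) → Set Ω :=
    fun a => {ω | (∀ i < m, V i ω = ext1 m a i) ∧ (∀ i < m, V' i ω = ext2 m a i)} with hcyl
  have hagree : ∀ (ω : Ω) (a : Fin m → ℕ × ℕ), ω ∈ cyl a →
      ∀ i < m, V i ω = ext1 m a i ∧ V' i ω = ext2 m a i := by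
    rintro ω a ⟨h1, h2⟩ i hi
    exact ⟨h1 i hi, h2 i hi⟩
  have hself : ∀ ω : Ω, ω ∈ cyl (fun i : Fin m => (V i ω, V' i ω)) := by
    intro ω
    constructor <;> intro i hi <;> simp [ext1, ext2, hi]
  have hE : {ω | sInf (goodSet (fun i => V i ω) (fun i => V' i ω)) = m}
      = ⋃ a : {a : Fin m → ℕ × ℕ // sInf (goodSet (ext1 m a) (ext2 m a)) = m}, cyl a.1 := by
    ext ω
    simp only [Set.mem_setOf_eq, Set.mem_iUnion, Subtype.exists]
    constructor
    · intro h
      refine ⟨fun i : Fin m => (V i ω, V' i ω), ?_, hself ω⟩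
      rw [← sInf_goodSet_local hm (fun i hi => ?_)]
      · exact h
      · simp [ext1, ext2, hi]
    · rintro ⟨a, ha, hωa⟩
      rw [sInf_goodSet_local hm (hagree ω a hωa)]
      exact ha
  have hdisj : Pairwise (Function.onFun Disjoint
      (fun a : {a : Fin m → ℕ × ℕ // sInf (goodSet (ext1 m a) (ext2 m a)) = m} => cyl a.1)) := by
    rintro a b hab
    rw [Function.onFun, Set.disjoint_left]
    intro ω hωa hωb
    refine hab (Subtype.ext (funext fun i => ?_))
    have h1 := hagree ω a.1 hωa i i.isLt
    have h2 := hagree ω b.1 hωb i i.isLt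
    have e1 : ext1 m a.1 i.1 = (a.1 i).1 := by simp [ext1, i.isLt]
    have e2 : ext2 m a.1 i.1 = (a.1 i).2 := by simp [ext2, i.isLt]
    have e3 : ext1 m b.1 i.1 = (b.1 i).1 := by simp [ext1, i.isLt]
    have e4 : ext2 m b.1 i.1 = (b.1 i).2 := by simp [ext2, i.isLt]
    have : (a.1 i).1 = (b.1 i).1 := by rw [← e1, ← e3, ← h1.1, ← h2.1]
    have h5 : (a.1 i).2 = (b.1 i).2 := by rw [← e2, ← e4, ← h1.2, ← h2.2]
    exact Prod.ext this h5
  have hms : ∀ a : Fin m → ℕ × ℕ, MeasurableSet (cyl a) := by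
    intro a
    have : cyl a = (⋂ i, ⋂ (_ : i < m), V i ⁻¹' {ext1 m a i}) ∩
        ⋂ i, ⋂ (_ : i < m), V' i ⁻¹' {ext2 m a i} := by
      ext ω
      simp [hcyl, Set.mem_iInter]
    rw [this]
    exact (MeasurableSet.iInter fun i => MeasurableSet.iInter fun _ =>
        hmV i (measurableSet_singleton _)).inter
      (MeasurableSet.iInter fun i => MeasurableSet.iInter fun _ =>
        hmV' i (measurableSet_singleton _))
  rw [hE, measure_iUnion hdisj (fun a => hms a.1)]

noncomputable def target (q q' : ℝ) (m : ℕ) : ENNReal :=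
  ∑' a : {a : Fin m → ℕ × ℕ // sInf (goodSet (ext1 m a) (ext2 m a)) = m},
    (∏ i ∈ Finset.range m, geomP q (ext1 m a.1 i)) *
      ∏ i ∈ Finset.range m, geomP q' (ext2 m a.1 i)

lemma main_pos {Ω : Type*} [MeasurableSpace Ω] (ℙ : Measure Ω) [IsProbabilityMeasure ℙ]
    (q q' : ℝ) (hq0 : 0 < q) (hq1 : q < 1) (hq'0 : 0 < q') (hq'1 : q' < 1)
    (V V' : ℕ → Ω → ℕ) (hmV : ∀ i, Measurable (V i)) (hmV' : ∀ i, Measurable (V' i))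
    (hgV : ∀ (i k : ℕ), 1 ≤ k → (ℙ {ω | V i ω = k}).toReal = (1 - q) * q ^ (k - 1))
    (hgV' : ∀ (i k : ℕ), 1 ≤ k → (ℙ {ω | V' i ω = k}).toReal = (1 - q') * (q') ^ (k - 1))
    (hindep : ProbabilityTheory.iIndepFun (Sum.elim V V') ℙ)
    (m : ℕ) (hm : 0 < m) :
    ℙ {ω | sInf (goodSet (fun i => V i ω) (fun i => V' i ω)) = m} = target q q' m := by
  rw [prob_sInf ℙ V V' hmV hmV' m hm, target]
  congr 1
  funext a
  rw [cyl_prob ℙ V V' hindep m (ext1 m a.1) (ext2 m a.1)]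
  congr 1
  · exact Finset.prod_congr rfl fun i _ =>
      geom_law ℙ q hq0 hq1 (V i) (hmV i) (hgV i) (ext1 m a.1 i)
  · exact Finset.prod_congr rfl fun i _ =>
      geom_law ℙ q' hq'0 hq'1 (V' i) (hmV' i) (hgV' i) (ext2 m a.1 i)

lemma meas_E {Ω : Type*} [MeasurableSpace Ω]
    (V V' : ℕ → Ω → ℕ) (hmV : ∀ i, Measurable (V i)) (hmV' : ∀ i, Measurable (V' i))
    (m : ℕ) :
    MeasurableSet {ω | sInf (goodSet (fun i => V i ω) (fun i => V' i ω)) = m} := by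
  have hG : ∀ j : ℕ, MeasurableSet {ω : Ω | j ∈ goodSet (fun i => V i ω) (fun i => V' i ω)} := by
    intro j
    have : {ω : Ω | j ∈ goodSet (fun i => V i ω) (fun i => V' i ω)}
        = {ω : Ω | 0 < j} ∩ ⋂ i, ⋂ (_ : i < j),
            ({ω | V i ω ≤ j - i} ∩ {ω | V' i ω ≤ j - i}) := by
      ext ω
      simp [goodSet, Set.mem_iInter, forall_and]
    rw [this]
    refine MeasurableSet.inter ?_ (MeasurableSet.iInter fun i => MeasurableSet.iInter fun _ =>
      (MeasurableSet.inter (hmV i measurableSet_Iic) (hmV' i measurableSet_Iic)))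
    by_cases h : 0 < j <;> simp [h]
  cases m with
  | zero =>
    have : {ω : Ω | sInf (goodSet (fun i => V i ω) (fun i => V' i ω)) = 0}
        = ⋂ j, {ω : Ω | j ∈ goodSet (fun i => V i ω) (fun i => V' i ω)}ᶜ := by
      ext ω
      simp only [Set.mem_setOf_eq, Set.mem_iInter, Set.mem_compl_iff]
      exact sInf_char_zero _ (zero_not_mem_goodSet _ _)
    rw [this]
    exact MeasurableSet.iInter fun j => (hG j).compl
  | succ m =>
    have : {ω : Ω | sInf (goodSet (fun i => V i ω) (fun i => V' i ω)) = m + 1}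
        = {ω : Ω | (m+1) ∈ goodSet (fun i => V i ω) (fun i => V' i ω)} ∩
          ⋂ k, ⋂ (_ : k < m + 1),
            {ω : Ω | k ∈ goodSet (fun i => V i ω) (fun i => V' i ω)}ᶜ := by
      ext ω
      simp only [Set.mem_setOf_eq, Set.mem_inter_iff, Set.mem_iInter, Set.mem_compl_iff]
      exact sInf_char _ (zero_not_mem_goodSet _ _) _ (Nat.succ_pos m)
    rw [this]
    exact (hG _).inter (MeasurableSet.iInter fun k => MeasurableSet.iInter fun _ => (hG k).compl)

lemma main_partition {Ω : Type*} [MeasurableSpace Ω] (ℙ : Measure Ω) [IsProbabilityMeasure ℙ]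
    (V V' : ℕ → Ω → ℕ) (hmV : ∀ i, Measurable (V i)) (hmV' : ∀ i, Measurable (V' i)) :
    ℙ {ω | sInf (goodSet (fun i => V i ω) (fun i => V' i ω)) = 0}
      + ∑' m : ℕ, ℙ {ω | sInf (goodSet (fun i => V i ω) (fun i => V' i ω)) = m + 1} = 1 := by
  have hdisj : Pairwise (Function.onFun Disjoint
      (fun m : ℕ => {ω : Ω | sInf (goodSet (fun i => V i ω) (fun i => V' i ω)) = m})) := by
    intro a b hab
    rw [Function.onFun, Set.disjoint_left]
    rintro ω (h1 : _ = a) (h2 : _ = b)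
    exact hab (h1 ▸ h2 ▸ rfl)
  have huniv : (⋃ m : ℕ, {ω : Ω | sInf (goodSet (fun i => V i ω) (fun i => V' i ω)) = m})
      = Set.univ := by
    ext ω; simp
  have hsum : ∑' m : ℕ, ℙ {ω | sInf (goodSet (fun i => V i ω) (fun i => V' i ω)) = m} = 1 := by
    rw [← measure_iUnion hdisj (meas_E V V' hmV hmV'), huniv, measure_univ]
  rw [← hsum]
  exact (tsum_eq_zero_add'
    (f := fun m => ℙ {ω | sInf (goodSet (fun i => V i ω) (fun i => V' i ω)) = m})
    ENNReal.summable).symm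
/-- **Lemma 5.1.** The first return time to `(0,0)` of the product chain `M⊗` started at
`(0,0)` has the same distribution as the first regeneration time `T_1` of two independent
infinite Mallows permutations with parameters `q` and `q'`. -/
theorem return_time_eq_regeneration_time
    {Ω₁ : Type*} [MeasurableSpace Ω₁] (ℙ₁ : Measure Ω₁) [IsProbabilityMeasure ℙ₁]
    {Ω₂ : Type*} [MeasurableSpace Ω₂] (ℙ₂ : Measure Ω₂) [IsProbabilityMeasure ℙ₂]
    (q q' : ℝ) (hq0 : 0 < q) (hq1 : q < 1) (hq'0 : 0 < q') (hq'1 : q' < 1)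
    -- the driving geometric sequences of the product chain
    (Z Z' : ℕ → Ω₁ → ℕ)
    (hmeas : ∀ i, Measurable (Z i)) (hmeas' : ∀ i, Measurable (Z' i))
    (hgeom : ∀ (i : ℕ) (k : ℕ), 1 ≤ k → (ℙ₁ {ω | Z i ω = k}).toReal = (1 - q) * q ^ (k - 1))
    (hgeom' : ∀ (i : ℕ) (k : ℕ), 1 ≤ k →
      (ℙ₁ {ω | Z' i ω = k}).toReal = (1 - q') * (q') ^ (k - 1))
    (hindep : ProbabilityTheory.iIndepFun (Sum.elim Z Z') ℙ₁)
    -- two independent infinite Mallows permutations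
    (M : InfMallows Ω₂ ℙ₂ q) (M' : InfMallows Ω₂ ℙ₂ q')
    (hindep2 : ProbabilityTheory.iIndepFun (Sum.elim M.Z M'.Z) ℙ₂) :
    ∀ m : ℕ,
      ℙ₁ {ω | sInf {k | 0 < k ∧ chainM 0 (fun i => Z i ω) k = 0 ∧
                chainM 0 (fun i => Z' i ω) k = 0} = m} =
      ℙ₂ {ω | sInf {j | 0 < j ∧ ∀ k < j, M.Pi ω k < j ∧ M'.Pi ω k < j} = m} := by

  intro m
  have hL : {ω : Ω₁ | sInf {k | 0 < k ∧ chainM 0 (fun i => Z i ω) k = 0 ∧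
        chainM 0 (fun i => Z' i ω) k = 0} = m}
      = {ω : Ω₁ | sInf (goodSet (fun i => Z i ω) (fun i => Z' i ω)) = m} := by
    ext ω
    have : {k | 0 < k ∧ chainM 0 (fun i => Z i ω) k = 0 ∧ chainM 0 (fun i => Z' i ω) k = 0}
        = goodSet (fun i => Z i ω) (fun i => Z' i ω) := by
      ext k
      simp only [Set.mem_setOf_eq, goodSet, chainM_eq_zero_iff]
      constructor
      · rintro ⟨h0, h1, h2⟩; exact ⟨h0, fun i hi => ⟨h1 i hi, h2 i hi⟩⟩
      · rintro ⟨h0, h⟩; exact ⟨h0, fun i hi => (h i hi).1, fun i hi => (h i hi).2⟩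
    rw [Set.mem_setOf_eq, this]; rfl
  have hR : {ω : Ω₂ | sInf {j | 0 < j ∧ ∀ k < j, M.Pi ω k < j ∧ M'.Pi ω k < j} = m}
      = {ω : Ω₂ | sInf (goodSet (fun i => M.Z i ω) (fun i => M'.Z i ω)) = m} := by
    ext ω
    have : {j | 0 < j ∧ ∀ k < j, M.Pi ω k < j ∧ M'.Pi ω k < j}
        = goodSet (fun i => M.Z i ω) (fun i => M'.Z i ω) := by
      ext j
      simp only [Set.mem_setOf_eq, goodSet]
      have hb := mallows_block (M.Pi ω) (fun i => M.Z i ω) (fun i => M.hins ω i) j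
      have hb' := mallows_block (M'.Pi ω) (fun i => M'.Z i ω) (fun i => M'.hins ω i) j
      constructor
      · rintro ⟨h0, h⟩
        refine ⟨h0, fun i hi => ?_⟩
        have h1 := hb.mp (fun k hk => (h k hk).1) i hi
        have h2 := hb'.mp (fun k hk => (h k hk).2) i hi
        omega
      · rintro ⟨h0, h⟩
        exact ⟨h0, fun k hk => ⟨hb.mpr (fun i hi => by have := (h i hi).1; omega) k hk,
          hb'.mpr (fun i hi => by have := (h i hi).2; omega) k hk⟩⟩
    rw [Set.mem_setOf_eq, this]; rfl
  rw [hL, hR]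
  cases m with
  | succ m =>
    rw [main_pos ℙ₁ q q' hq0 hq1 hq'0 hq'1 Z Z' hmeas hmeas' hgeom hgeom' hindep
        (m+1) (Nat.succ_pos m),
      main_pos ℙ₂ q q' hq0 hq1 hq'0 hq'1 M.Z M'.Z M.meas M'.meas M.geom M'.geom hindep2
        (m+1) (Nat.succ_pos m)]
  | zero =>
    have p1 := main_partition ℙ₁ Z Z' hmeas hmeas'
    have p2 := main_partition ℙ₂ M.Z M'.Z M.meas M'.meas
    have ht1 : ∑' k : ℕ, ℙ₁ {ω | sInf (goodSet (fun i => Z i ω) (fun i => Z' i ω)) = k + 1}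
        = ∑' k : ℕ, target q q' (k + 1) :=
      tsum_congr fun k => main_pos ℙ₁ q q' hq0 hq1 hq'0 hq'1 Z Z' hmeas hmeas' hgeom hgeom'
        hindep (k+1) (Nat.succ_pos k)
    have ht2 : ∑' k : ℕ, ℙ₂ {ω | sInf (goodSet (fun i => M.Z i ω) (fun i => M'.Z i ω)) = k + 1}
        = ∑' k : ℕ, target q q' (k + 1) :=
      tsum_congr fun k => main_pos ℙ₂ q q' hq0 hq1 hq'0 hq'1 M.Z M'.Z M.meas M'.meas M.geom
        M'.geom hindep2 (k+1) (Nat.succ_pos k)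
    rw [ht1] at p1
    rw [ht2] at p2
    have hS : (∑' k : ℕ, target q q' (k + 1)) ≠ ⊤ := by
      intro h
      rw [h] at p1
      simp at p1
    calc ℙ₁ {ω | sInf (goodSet (fun i => Z i ω) (fun i => Z' i ω)) = 0}
        = ℙ₁ {ω | sInf (goodSet (fun i => Z i ω) (fun i => Z' i ω)) = 0}
            + (∑' k : ℕ, target q q' (k + 1)) - (∑' k : ℕ, target q q' (k + 1)) :=
          (ENNReal.add_sub_cancel_right hS).symm
      _ = ℙ₂ {ω | sInf (goodSet (fun i => M.Z i ω) (fun i => M'.Z i ω)) = 0}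
            + (∑' k : ℕ, target q q' (k + 1)) - (∑' k : ℕ, target q q' (k + 1)) := by
          rw [p1, p2]
      _ = _ := ENNReal.add_sub_cancel_right hS
end
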